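/- arXiv:1803.01013 — 5 statements merged into one kernel-verified Lean document; each statement's English description precedes it below -/
import Mathlib

section
/- Let x_1, ..., x_N ∈ ℝ^D span ℝ^D and let 1 ≤ d < D be an integer. Then every minimizer P of F(P) = ∑_{i=1}^N ‖(I − P) x_i‖ over the set {P ∈ ℝ^{D×D} : P symmetric, P ⪰ 0, Tr(P) = d} satisfies P ⪯ I. Consequently, the minimizers of F over this set coincide with the minimizers of F over the REAPER feasible set 𝔾 = {P ∈ ℝ^{D×D} : P symmetric, 0 ⪯ P ⪯ I, Tr(P) = d}; that is, the REAPER minimizer does not change if the constraint P ⪯ I is removed. -/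
open Matrix

lemma uconj_trace {D : ℕ} {U : Matrix (Fin D) (Fin D) ℝ}
    (hU : U ∈ Matrix.unitaryGroup (Fin D) ℝ) (c : Fin D → ℝ) :
    (U * diagonal c * star U).trace = ∑ j, c j := by
  rw [trace_mul_cycle, mem_unitaryGroup_iff'.mp hU, one_mul, trace_diagonal]

lemma mulVec_sq_sum {D : ℕ} {U : Matrix (Fin D) (Fin D) ℝ}
    (hU : U ∈ Matrix.unitaryGroup (Fin D) ℝ) (w : Fin D → ℝ) :
    ∑ j, ((U *ᵥ w) j) ^ 2 = ∑ j, (w j) ^ 2 := by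
  have h1 : ∑ j, ((U *ᵥ w) j) ^ 2 = (U *ᵥ w) ⬝ᵥ (U *ᵥ w) := by
    simp [dotProduct, sq]
  have h2 : ∑ j, (w j) ^ 2 = w ⬝ᵥ w := by simp [dotProduct, sq]
  rw [h1, h2, dotProduct_mulVec, ← mulVec_transpose,
    ← conjTranspose_eq_transpose_of_trivial, ← star_eq_conjTranspose,
    mulVec_mulVec, mem_unitaryGroup_iff'.mp hU, one_mulVec]

lemma sq_sum_decomp {D : ℕ} {U : Matrix (Fin D) (Fin D) ℝ}
    (hU : U ∈ Matrix.unitaryGroup (Fin D) ℝ) (c : Fin D → ℝ) (v : Fin D → ℝ) :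
    ∑ j, ((v - (U * diagonal c * star U) *ᵥ v) j) ^ 2
      = ∑ j, (1 - c j) ^ 2 * ((star U *ᵥ v) j) ^ 2 := by
  set y := star U *ᵥ v with hy
  have hv : v = U *ᵥ y := by
    rw [hy, mulVec_mulVec, mem_unitaryGroup_iff.mp hU, one_mulVec]
  have key : v - (U * diagonal c * star U) *ᵥ v = U *ᵥ (fun j => (1 - c j) * y j) := by
    conv_lhs => rw [hv]
    rw [← mulVec_mulVec, ← mulVec_mulVec]
    have hyy : star U *ᵥ (U *ᵥ y) = y := by
      rw [mulVec_mulVec, mem_unitaryGroup_iff'.mp hU, one_mulVec]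
    have harg : (y - diagonal c *ᵥ y) = fun j => (1 - c j) * y j := by
      funext j
      simp only [Pi.sub_apply, mulVec_diagonal]
      ring
    rw [hyy, ← mulVec_sub, harg]
  rw [key, mulVec_sq_sum hU]
  congr 1
  funext j
  ring

lemma uconj_one {D : ℕ} {U : Matrix (Fin D) (Fin D) ℝ}
    (hU : U ∈ Matrix.unitaryGroup (Fin D) ℝ) :
    (1 : Matrix (Fin D) (Fin D) ℝ) = U * diagonal (fun _ => (1:ℝ)) * star U := by
  rw [diagonal_one, mul_one, mem_unitaryGroup_iff.mp hU]

lemma uconj_psd {D : ℕ} {U : Matrix (Fin D) (Fin D) ℝ}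
    (_hU : U ∈ Matrix.unitaryGroup (Fin D) ℝ) {c : Fin D → ℝ} (hc : ∀ j, 0 ≤ c j) :
    (U * diagonal c * star U).PosSemidef := by
  rw [star_eq_conjTranspose]
  exact (posSemidef_diagonal_iff.mpr hc).mul_mul_conjTranspose_same U

lemma uconj_sub {D : ℕ} (U : Matrix (Fin D) (Fin D) ℝ) (a b : Fin D → ℝ) :
    U * diagonal a * star U - U * diagonal b * star U
      = U * diagonal (fun j => a j - b j) * star U := by
  rw [← sub_mul, ← mul_sub, diagonal_sub]

lemma reaper_key {D d N : ℕ} (hdD : d < D)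
    {x : Fin N → Fin D → ℝ}
    (hspan : Submodule.span ℝ (Set.range x) = (⊤ : Submodule ℝ (Fin D → ℝ)))
    (Q : Matrix (Fin D) (Fin D) ℝ) (hQ : Q.PosSemidef) (htr : Q.trace = (d : ℝ)) :
    ∃ Q' : Matrix (Fin D) (Fin D) ℝ,
      Q'.PosSemidef ∧ ((1 : Matrix (Fin D) (Fin D) ℝ) - Q').PosSemidef ∧
      Q'.trace = (d : ℝ) ∧
      (∀ i, ∑ j, ((x i - Q' *ᵥ x i) j) ^ 2 ≤ ∑ j, ((x i - Q *ᵥ x i) j) ^ 2) ∧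
      (¬ ((1 : Matrix (Fin D) (Fin D) ℝ) - Q).PosSemidef →
        ∃ i, ∑ j, ((x i - Q' *ᵥ x i) j) ^ 2 < ∑ j, ((x i - Q *ᵥ x i) j) ^ 2) := by
  have hH : Q.IsHermitian := hQ.1
  set U : Matrix (Fin D) (Fin D) ℝ := (hH.eigenvectorUnitary : Matrix (Fin D) (Fin D) ℝ)
    with hUdef
  have hU : U ∈ Matrix.unitaryGroup (Fin D) ℝ := (hH.eigenvectorUnitary).2
  set lam : Fin D → ℝ := hH.eigenvalues with hlamdef
  have hQspec : Q = U * diagonal lam * star U := by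
    have h := hH.spectral_theorem
    have hco : (RCLike.ofReal ∘ hH.eigenvalues : Fin D → ℝ) = lam := rfl
    rw [hco] at h
    exact h
  have hlam0 : ∀ j, 0 ≤ lam j := fun j => hQ.eigenvalues_nonneg j
  have hsum : ∑ j, lam j = (d : ℝ) := by
    have h := uconj_trace hU lam
    rw [← hQspec, htr] at h
    exact h.symm
  set s : ℝ := ∑ j, max (lam j - 1) 0 with hsdef
  have hs0 : 0 ≤ s := Finset.sum_nonneg fun j _ => le_max_right _ _
  have hdD' : (d : ℝ) < (D : ℝ) := by exact_mod_cast hdD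
  have hden : (0:ℝ) < (D:ℝ) - d + s := by linarith
  set t : ℝ := s / ((D:ℝ) - d + s) with htdef
  have ht0 : 0 ≤ t := div_nonneg hs0 hden.le
  have ht1 : t ≤ 1 := by rw [htdef, div_le_one hden]; linarith
  have hts : t * ((D:ℝ) - d + s) = s := div_mul_cancel₀ s hden.ne'
  set mu : Fin D → ℝ := fun j => min (lam j) 1 + t * (1 - min (lam j) 1) with hmudef
  have hmin0 : ∀ j, 0 ≤ min (lam j) 1 := fun j => le_min (hlam0 j) zero_le_one
  have hmin1 : ∀ j, min (lam j) 1 ≤ 1 := fun j => min_le_right _ _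
  have hmu0 : ∀ j, 0 ≤ mu j := fun j =>
    add_nonneg (hmin0 j) (mul_nonneg ht0 (by linarith [hmin1 j]))
  have hmu1 : ∀ j, mu j ≤ 1 := by
    intro j
    simp only [hmudef]
    nlinarith [hmin0 j, hmin1 j]
  have hmusum : ∑ j, mu j = (d : ℝ) := by
    have hminmax : ∀ j, min (lam j) 1 = lam j - max (lam j - 1) 0 := by
      intro j
      rcases le_total (lam j) 1 with h | h
      · rw [min_eq_left h, max_eq_right (by linarith)]; ring
      · rw [min_eq_right h, max_eq_left (by linarith)]; ring
    have hmsum : ∑ j, min (lam j) 1 = (d:ℝ) - s := by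
      simp only [hminmax]
      rw [Finset.sum_sub_distrib, hsum, ← hsdef]
    have hone : ∑ _j : Fin D, (1:ℝ) = (D:ℝ) := by simp
    calc ∑ j, mu j = ∑ j, min (lam j) 1 + t * (∑ j, ((1:ℝ) - min (lam j) 1)) := by
          rw [Finset.mul_sum, ← Finset.sum_add_distrib]
      _ = ((d:ℝ) - s) + t * ((D:ℝ) - ((d:ℝ) - s)) := by
          rw [Finset.sum_sub_distrib, hone, hmsum]
      _ = (d : ℝ) := by
          have : (D:ℝ) - ((d:ℝ) - s) = (D:ℝ) - d + s := by ring
          rw [this, hts]; ring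
  refine ⟨U * diagonal mu * star U, uconj_psd hU hmu0, ?_, ?_, ?_, ?_⟩
  · rw [uconj_one hU, uconj_sub]
    exact uconj_psd hU (fun j => by linarith [hmu1 j])
  · rw [uconj_trace hU, hmusum]
  · intro i
    rw [sq_sum_decomp hU, hQspec, sq_sum_decomp hU]
    apply Finset.sum_le_sum
    intro j _
    apply mul_le_mul_of_nonneg_right _ (sq_nonneg _)
    rcases le_total (lam j) 1 with h | h
    · have hmeq : min (lam j) 1 = lam j := min_eq_left h
      have hlmu : lam j ≤ mu j := by
        simp only [hmudef, hmeq]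
        nlinarith
      apply sq_le_sq'
      · linarith [hmu1 j]
      · linarith
    · have hmeq : min (lam j) 1 = 1 := min_eq_right h
      have : mu j = 1 := by simp only [hmudef, hmeq]; ring
      rw [this]
      simp [sq_nonneg]
  · intro hns
    -- there is an eigenvalue > 1
    have hex : ∃ j0, 1 < lam j0 := by
      by_contra hno
      push_neg at hno
      apply hns
      rw [hQspec, uconj_one hU, uconj_sub]
      exact uconj_psd hU (fun j => by linarith [hno j])
    obtain ⟨j0, hj0⟩ := hex
    have hmuj0 : mu j0 = 1 := by
      have hmeq : min (lam j0) 1 = 1 := min_eq_right hj0.le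
      simp only [hmudef, hmeq]; ring
    -- find i0 with nonzero coefficient
    have hex2 : ∃ i0, (star U *ᵥ x i0) j0 ≠ 0 := by
      by_contra hno
      push_neg at hno
      set f : (Fin D → ℝ) →ₗ[ℝ] ℝ := (LinearMap.proj j0).comp (star U).mulVecLin with hfdef
      have hker : Submodule.span ℝ (Set.range x) ≤ LinearMap.ker f := by
        rw [Submodule.span_le]
        rintro v ⟨i, rfl⟩
        exact hno i
      rw [hspan, top_le_iff, LinearMap.ker_eq_top] at hker
      have hval : f (U *ᵥ Pi.single j0 1) = 1 := by
        simp only [hfdef, LinearMap.comp_apply, mulVecLin_apply, LinearMap.proj_apply,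
          mulVec_mulVec, mem_unitaryGroup_iff'.mp hU, one_mulVec]
        simp
      rw [hker] at hval
      simp at hval
    obtain ⟨i0, hi0⟩ := hex2
    refine ⟨i0, ?_⟩
    rw [sq_sum_decomp hU, hQspec, sq_sum_decomp hU]
    apply Finset.sum_lt_sum
    · intro j _
      apply mul_le_mul_of_nonneg_right _ (sq_nonneg _)
      rcases le_total (lam j) 1 with h | h
      · have hmeq : min (lam j) 1 = lam j := min_eq_left h
        have hlmu : lam j ≤ mu j := by
          simp only [hmudef, hmeq]; nlinarith
        apply sq_le_sq'
        · linarith [hmu1 j]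
        · linarith
      · have hmeq : min (lam j) 1 = 1 := min_eq_right h
        have : mu j = 1 := by simp only [hmudef, hmeq]; ring
        rw [this]
        simp [sq_nonneg]
    · refine ⟨j0, Finset.mem_univ _, ?_⟩
      rw [hmuj0]
      have hy2 : 0 < ((star U *ᵥ x i0) j0) ^ 2 :=
        (sq_nonneg _).lt_of_ne (Ne.symm (pow_ne_zero 2 hi0))
      have hl2 : 0 < (1 - lam j0) ^ 2 := by nlinarith
      simpa using mul_pos hl2 hy2

/-- Let `x 1, …, x N ∈ ℝ^D` span `ℝ^D` and `1 ≤ d < D`. Every minimizer `P`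
of `F(P) = ∑ ‖(I − P) x i‖` over the set `{P : P symmetric, P ⪰ 0, Tr P = d}` satisfies
`P ⪯ I`. Consequently, the minimizers of `F` over this set coincide with the minimizers of
`F` over the REAPER feasible set `𝔾 = {P : P symmetric, 0 ⪯ P ⪯ I, Tr P = d}`; the REAPER
minimizer does not change if the constraint `P ⪯ I` is removed. -/
theorem reaper_drop_upper_constraint (D d N : ℕ) (hd : 1 ≤ d) (hdD : d < D)
    (x : Fin N → Fin D → ℝ)
    (hspan : Submodule.span ℝ (Set.range x) = (⊤ : Submodule ℝ (Fin D → ℝ)))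
    (F : Matrix (Fin D) (Fin D) ℝ → ℝ)
    (hF : ∀ P : Matrix (Fin D) (Fin D) ℝ,
      F P = ∑ i, Real.sqrt (∑ j, ((x i - P.mulVec (x i)) j) ^ 2)) :
    (∀ P : Matrix (Fin D) (Fin D) ℝ,
      P.PosSemidef → P.trace = (d : ℝ) →
      (∀ Q : Matrix (Fin D) (Fin D) ℝ, Q.PosSemidef → Q.trace = (d : ℝ) → F P ≤ F Q) →
      ((1 : Matrix (Fin D) (Fin D) ℝ) - P).PosSemidef) ∧
    {P : Matrix (Fin D) (Fin D) ℝ |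
        (P.PosSemidef ∧ P.trace = (d : ℝ)) ∧
        ∀ Q : Matrix (Fin D) (Fin D) ℝ, Q.PosSemidef ∧ Q.trace = (d : ℝ) → F P ≤ F Q} =
      {P : Matrix (Fin D) (Fin D) ℝ |
        (P.PosSemidef ∧ ((1 : Matrix (Fin D) (Fin D) ℝ) - P).PosSemidef ∧ P.trace = (d : ℝ)) ∧
        ∀ Q : Matrix (Fin D) (Fin D) ℝ,
          Q.PosSemidef ∧ ((1 : Matrix (Fin D) (Fin D) ℝ) - Q).PosSemidef ∧ Q.trace = (d : ℝ) →
            F P ≤ F Q} := by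
  have part1 : ∀ P : Matrix (Fin D) (Fin D) ℝ,
      P.PosSemidef → P.trace = (d : ℝ) →
      (∀ Q : Matrix (Fin D) (Fin D) ℝ, Q.PosSemidef → Q.trace = (d : ℝ) → F P ≤ F Q) →
      ((1 : Matrix (Fin D) (Fin D) ℝ) - P).PosSemidef := by
    intro P hP htr hmin
    by_contra hcon
    obtain ⟨Q', h1, h2, h3, h4, h5⟩ := reaper_key hdD hspan P hP htr
    obtain ⟨i0, hi0⟩ := h5 hcon
    have hlt : F Q' < F P := by
      rw [hF, hF]
      apply Finset.sum_lt_sum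
      · intro i _
        exact Real.sqrt_le_sqrt (h4 i)
      · exact ⟨i0, Finset.mem_univ _,
          Real.sqrt_lt_sqrt (Finset.sum_nonneg fun j _ => sq_nonneg _) hi0⟩
    exact absurd (hmin Q' h1 h3) (not_le.mpr hlt)
  refine ⟨part1, ?_⟩
  ext P
  simp only [Set.mem_setOf_eq]
  constructor
  · rintro ⟨⟨hpsd, htr⟩, hmin⟩
    have hub := part1 P hpsd htr (fun Q hQ1 hQ2 => hmin Q ⟨hQ1, hQ2⟩)
    exact ⟨⟨hpsd, hub, htr⟩, fun Q hQ => hmin Q ⟨hQ.1, hQ.2.2⟩⟩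
  · rintro ⟨⟨hpsd, hub, htr⟩, hmin⟩
    refine ⟨⟨hpsd, htr⟩, ?_⟩
    rintro Q ⟨hQ1, hQ2⟩
    obtain ⟨Q', h1, h2, h3, h4, _⟩ := reaper_key hdD hspan Q hQ1 hQ2
    have hle1 : F P ≤ F Q' := hmin Q' ⟨h1, h2, h3⟩
    have hle2 : F Q' ≤ F Q := by
      rw [hF, hF]
      exact Finset.sum_le_sum fun i _ => Real.sqrt_le_sqrt (h4 i)
    linarith
end

section
/- For integers 0 ≤ d ≤ D, the set 𝔾 = {P ∈ ℝ^{D×D} : P symmetric, 0 ⪯ P ⪯ I, Tr(P) = d} is the convex hull of the set of orthogonal projection matrices of rank d, i.e., the convex hull of {P ∈ ℝ^{D×D} : P = Pᵀ, P² = P, rank(P) = d}. -/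
/-!
Diagonalising `P = U diag(λ) Uᵀ`, the conditions `0 ⪯ P ⪯ I` and `Tr P = d` say exactly
that `λ` lies in the hypersimplex `{x ∈ [0,1]^D | ∑ xᵢ = d}`, and the linear map
`x ↦ U diag(x) Uᵀ` sends its `0/1` points to projections of rank `d`. By Krein–Milman the
hypersimplex is the convex hull of its extreme points, and these are `0/1` points: as `∑ xᵢ` is
an integer, a fractional coordinate comes with a second one, and shifting mass between the two
in either direction stays inside the hypersimplex. The reverse inclusion is convexity of the
left-hand side together with `Tr P = rank P` for a symmetric idempotent `P`.
-/

open Matrix Set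
open scoped ComplexOrder

theorem sum_eq_card_ne_zero_of_mem_pi {ι K : Type*} [Fintype ι] [AddCommMonoidWithOne K]
    [NeZero (1 : K)] [DecidableEq K] {x : ι → K} (hx : x ∈ univ.pi fun _ => {0, 1}) :
    ∑ i, x i = (Finset.univ.filter fun i => x i ≠ 0).card := by
  rw [← Finset.sum_boole]
  refine Finset.sum_congr rfl fun i _ => ?_
  obtain h | h : x i = 0 ∨ x i = 1 := hx i (mem_univ i) <;> simp [h]

theorem isIdempotentElem_iff_mem_pi {ι K : Type*} [MonoidWithZero K] [IsLeftCancelMulZero K]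
    {x : ι → K} : IsIdempotentElem x ↔ x ∈ univ.pi fun _ => {0, 1} := by
  simp [IsIdempotentElem, funext_iff, ← IsIdempotentElem.iff_eq_zero_or_one]

theorem eq_zero_of_mem_extremePoints_of_add_mem_of_sub_mem {E : Type*} [AddCommGroup E]
    [Module ℝ E] {A : Set E} {x v : E} (hx : x ∈ A.extremePoints ℝ) (hadd : x + v ∈ A)
    (hsub : x - v ∈ A) : v = 0 := by
  simpa using hx.2 hadd hsub (mem_openSegment_add_sub x v)

def hypersimplex (ι : Type*) [Fintype ι] (d : ℕ) : Set (ι → ℝ) :=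
  Icc 0 1 ∩ {x | ∑ i, x i = d}

section hypersimplex

variable {ι : Type*} [Fintype ι] {d : ℕ}

theorem isCompact_hypersimplex (ι : Type*) [Fintype ι] (d : ℕ) :
    IsCompact (hypersimplex ι d) :=
  isCompact_Icc.inter_right <|
    isClosed_eq (continuous_finsetSum _ fun i _ => continuous_apply i) continuous_const

theorem convex_hypersimplex (ι : Type*) [Fintype ι] (d : ℕ) : Convex ℝ (hypersimplex ι d) :=
  (convex_Icc 0 1).inter <|
    convex_hyperplane ⟨fun _ _ => Finset.sum_add_distrib, fun _ _ => (Finset.mul_sum ..).symm⟩ _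

theorem exists_ne_mem_Ioo_of_mem_hypersimplex {x : ι → ℝ} (hx : x ∈ hypersimplex ι d)
    {i : ι} (hi : x i ∈ Ioo 0 1) : ∃ j ≠ i, x j ∈ Ioo 0 1 := by
  classical
  by_contra! h
  have h01 : ∀ j ∈ Finset.univ.erase i, x j = if x j = 1 then 1 else 0 := fun j hj => by
    split_ifs with hj1
    · exact hj1
    · refine ((hx.1.1 j).eq_or_lt.resolve_right fun hj0 => ?_).symm
      exact h j (Finset.ne_of_mem_erase hj) ⟨hj0, (hx.1.2 j).lt_of_ne hj1⟩
  have hsum : ∑ j, x j = d := hx.2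
  rw [← Finset.add_sum_erase _ _ (Finset.mem_univ i), Finset.sum_congr rfl h01,
    Finset.sum_boole] at hsum
  set m := (Finset.univ.erase i |>.filter fun j => x j = 1).card
  have hxi : x i = ((d - m : ℤ) : ℝ) := by
    push_cast
    linarith
  obtain ⟨hi0, hi1⟩ := hxi ▸ hi
  norm_cast at hi0 hi1
  omega

theorem add_smul_single_sub_single_mem_hypersimplex [DecidableEq ι] {x : ι → ℝ}
    (hx : x ∈ hypersimplex ι d) {i j : ι} (hij : i ≠ j) {t : ℝ} (ht : 0 ≤ t)
    (hti : t ≤ 1 - x i) (htj : t ≤ x j) :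
    x + t • (Pi.single i 1 - Pi.single j 1) ∈ hypersimplex ι d := by
  have h0 : ∀ k, 0 ≤ x k := hx.1.1
  have h1 : ∀ k, x k ≤ 1 := hx.1.2
  have hk (k : ι) :
      x k + t * ((Pi.single i 1 : ι → ℝ) k - (Pi.single j 1 : ι → ℝ) k) ∈ Icc 0 1 := by
    rcases eq_or_ne k i with rfl | hki
    · simp only [Pi.single_eq_same, Pi.single_eq_of_ne hij]
      constructor <;> linarith [h0 k]
    rcases eq_or_ne k j with rfl | hkj
    · simp only [Pi.single_eq_same, Pi.single_eq_of_ne hki]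
      constructor <;> linarith [h1 k]
    simpa [hki, hkj] using ⟨h0 k, h1 k⟩
  refine ⟨⟨fun k => (hk k).1, fun k => (hk k).2⟩, ?_⟩
  simp [Finset.sum_add_distrib, ← Finset.mul_sum, Finset.sum_sub_distrib, hx.2.out]

theorem extremePoints_hypersimplex_subset :
    (hypersimplex ι d).extremePoints ℝ ⊆ univ.pi fun _ => {0, 1} := by
  classical
  intro x hx i _
  obtain ⟨⟨h0, h1⟩, -⟩ := hx.1
  by_contra hi
  have hi : x i ∈ Ioo 0 1 := by
    simp only [mem_insert_iff, mem_singleton_iff, not_or] at hi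
    exact ⟨(h0 i).lt_of_ne' hi.1, (h1 i).lt_of_ne hi.2⟩
  obtain ⟨j, hji, hj⟩ := exists_ne_mem_Ioo_of_mem_hypersimplex hx.1 hi
  set t := min (min (x i) (1 - x i)) (min (x j) (1 - x j))
  have ht : 0 < t :=
    lt_min (lt_min hi.1 (by linarith [hi.2])) (lt_min hj.1 (by linarith [hj.2]))
  have hadd := add_smul_single_sub_single_mem_hypersimplex hx.1 hji.symm ht.le
    ((min_le_left _ _).trans (min_le_right _ _)) ((min_le_right _ _).trans (min_le_left _ _))
  have hsub := add_smul_single_sub_single_mem_hypersimplex hx.1 hji ht.le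
    ((min_le_right _ _).trans (min_le_right _ _)) ((min_le_left _ _).trans (min_le_left _ _))
  rw [← neg_sub, smul_neg, ← sub_eq_add_neg] at hsub
  have hv := congrFun (eq_zero_of_mem_extremePoints_of_add_mem_of_sub_mem hx hadd hsub) i
  simp [hji.symm] at hv
  exact ht.ne' hv

theorem convexHull_hypersimplex_inter_pi :
    convexHull ℝ (hypersimplex ι d ∩ univ.pi fun _ => {0, 1}) = hypersimplex ι d := by
  refine (convexHull_min inter_subset_left (convex_hypersimplex ι d)).antisymm ?_
  have hfin : (hypersimplex ι d ∩ univ.pi fun _ => {0, 1}).Finite :=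
    (Set.Finite.pi fun _ => toFinite _).subset inter_subset_right
  calc hypersimplex ι d
      = closure (convexHull ℝ ((hypersimplex ι d).extremePoints ℝ)) :=
        (closure_convexHull_extremePoints (isCompact_hypersimplex ι d)
          (convex_hypersimplex ι d)).symm
    _ ⊆ closure (convexHull ℝ (hypersimplex ι d ∩ univ.pi fun _ => {0, 1})) :=
        closure_mono <| convexHull_mono <|
          subset_inter extremePoints_subset extremePoints_hypersimplex_subset
    _ = _ := (hfin.isClosed_convexHull ℝ).closure_eq

end hypersimplex

namespace Matrix

theorem IsHermitian.posSemidef_of_isIdempotentElem {n 𝕜 : Type*} [Fintype n] [RCLike 𝕜]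
    {P : Matrix n n 𝕜} (hP : P.IsHermitian) (h : IsIdempotentElem P) : P.PosSemidef := by
  simpa [hP.eq, h.eq] using posSemidef_conjTranspose_mul_self P

variable {n : Type*} [Fintype n] [DecidableEq n]

noncomputable def conjDiagonal (U : unitary (Matrix n n ℝ)) :
    (n → ℝ) →ₐ[ℝ] Matrix n n ℝ :=
  (Unitary.conjStarAlgAut ℝ (Matrix n n ℝ) U).toAlgEquiv.toAlgHom.comp (diagonalAlgHom ℝ)

section conjDiagonal

variable (U : unitary (Matrix n n ℝ))

theorem conjDiagonal_apply (x : n → ℝ) :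
    conjDiagonal U x = U * diagonal x * star (U : Matrix n n ℝ) := rfl

theorem conjDiagonal_injective : Function.Injective (conjDiagonal U) :=
  (Unitary.conjStarAlgAut ℝ _ U).injective.comp diagonal_injective

theorem isHermitian_conjDiagonal (x : n → ℝ) : (conjDiagonal U x).IsHermitian := by
  simpa [conjDiagonal_apply, star_eq_conjTranspose] using
    isHermitian_mul_mul_conjTranspose (U : Matrix n n ℝ) (isHermitian_diagonal x)

theorem posSemidef_conjDiagonal_iff {x : n → ℝ} :
    (conjDiagonal U x).PosSemidef ↔ 0 ≤ x := by
  rw [conjDiagonal_apply, Unitary.isUnit_coe.posSemidef_star_right_conjugate_iff,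
    posSemidef_diagonal_iff, Pi.le_def]
  rfl

theorem trace_conjDiagonal (x : n → ℝ) : (conjDiagonal U x).trace = ∑ i, x i := by
  rw [conjDiagonal_apply, trace_mul_cycle, Unitary.coe_star_mul_self, one_mul, trace_diagonal]

theorem isIdempotentElem_conjDiagonal_iff {x : n → ℝ} :
    IsIdempotentElem (conjDiagonal U x) ↔ x ∈ univ.pi fun _ => {0, 1} := by
  rw [← isIdempotentElem_iff_mem_pi]
  refine ⟨fun h => conjDiagonal_injective U ?_, fun h => h.map _⟩
  rw [map_mul]
  exact h

end conjDiagonal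

theorem IsHermitian.conjDiagonal_eigenvalues {A : Matrix n n ℝ} (hA : A.IsHermitian) :
    conjDiagonal hA.eigenvectorUnitary hA.eigenvalues = A := by
  conv_rhs => rw [hA.spectral_theorem]
  simp [conjDiagonal_apply]

theorem IsHermitian.trace_eq_rank_of_isIdempotentElem {A : Matrix n n ℝ} (hA : A.IsHermitian)
    (h : IsIdempotentElem A) : A.trace = A.rank := by
  rw [← hA.conjDiagonal_eigenvalues, isIdempotentElem_conjDiagonal_iff] at h
  rw [hA.trace_eq_sum_eigenvalues, hA.rank_eq_card_non_zero_eigs, Fintype.card_subtype]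
  simpa using sum_eq_card_ne_zero_of_mem_pi h

theorem PosSemidef.eigenvalues_mem_hypersimplex {P : Matrix n n ℝ} {d : ℕ} (hP : P.PosSemidef)
    (hP' : (1 - P).PosSemidef) (htr : P.trace = d) :
    hP.isHermitian.eigenvalues ∈ hypersimplex n d := by
  have hP_eq := hP.isHermitian.conjDiagonal_eigenvalues
  rw [← hP_eq, posSemidef_conjDiagonal_iff] at hP
  rw [← hP_eq, ← map_one (conjDiagonal _), ← map_sub, posSemidef_conjDiagonal_iff,
    sub_nonneg] at hP'
  rw [← hP_eq, trace_conjDiagonal] at htr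
  exact ⟨⟨hP, hP'⟩, htr⟩

theorem conjDiagonal_mem_projections (U : unitary (Matrix n n ℝ)) {d : ℕ} {x : n → ℝ}
    (hx : x ∈ hypersimplex n d ∩ univ.pi fun _ => {0, 1}) :
    conjDiagonal U x ∈ {P : Matrix n n ℝ | P.IsSymm ∧ P * P = P ∧ P.rank = d} := by
  have hidem := (isIdempotentElem_conjDiagonal_iff U).2 hx.2
  have hrank := (isHermitian_conjDiagonal U x).trace_eq_rank_of_isIdempotentElem hidem
  rw [trace_conjDiagonal, hx.1.2.out] at hrank
  exact ⟨isHermitian_iff_isSymm.1 (isHermitian_conjDiagonal U x), hidem,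
    by exact_mod_cast hrank.symm⟩

theorem convex_setOf_posSemidef_one_sub_posSemidef_trace_eq (c : ℝ) :
    Convex ℝ
      {P : Matrix n n ℝ | P.IsSymm ∧ P.PosSemidef ∧ (1 - P).PosSemidef ∧ P.trace = c} := by
  rintro A ⟨hA, hA0, hA1, hAtr⟩ B ⟨hB, hB0, hB1, hBtr⟩ a b ha hb hab
  have h1 : 1 - (a • A + b • B) = a • (1 - A) + b • (1 - B) := by
    rw [smul_sub, smul_sub, sub_add_sub_comm, ← add_smul, hab, one_smul]
  refine ⟨(hA.smul a).add (hB.smul b), (hA0.smul ha).add (hB0.smul hb),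
    h1 ▸ (hA1.smul ha).add (hB1.smul hb), ?_⟩
  rw [trace_add, trace_smul, trace_smul, hAtr, hBtr, smul_eq_mul, smul_eq_mul, ← add_mul, hab,
    one_mul]

end Matrix

theorem reaper_set_eq_convexHull_projections_general (D d : ℕ) :
    {P : Matrix (Fin D) (Fin D) ℝ |
        P.IsSymm ∧ P.PosSemidef ∧ ((1 : Matrix (Fin D) (Fin D) ℝ) - P).PosSemidef ∧
        P.trace = (d : ℝ)} =
      convexHull ℝ
        {P : Matrix (Fin D) (Fin D) ℝ | P.IsSymm ∧ P * P = P ∧ P.rank = d} := by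
  refine Subset.antisymm ?_ <|
    convexHull_min ?_ (convex_setOf_posSemidef_one_sub_posSemidef_trace_eq d)
  · rintro P ⟨-, hP, hP', htr⟩
    have hx := hP.eigenvalues_mem_hypersimplex hP' htr
    rw [← convexHull_hypersimplex_inter_pi] at hx
    rw [← hP.isHermitian.conjDiagonal_eigenvalues]
    set f := (conjDiagonal hP.isHermitian.eigenvectorUnitary).toLinearMap
    refine convexHull_mono ?_ (f.image_convexHull _ ▸ mem_image_of_mem f hx)
    rintro _ ⟨x, hx, rfl⟩
    exact conjDiagonal_mem_projections _ hx
  · rintro Q ⟨hQ, hQQ, hrank⟩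
    have hH := isHermitian_iff_isSymm.2 hQ
    exact ⟨hQ, hH.posSemidef_of_isIdempotentElem hQQ,
      (isHermitian_one.sub hH).posSemidef_of_isIdempotentElem
        (IsIdempotentElem.one_sub hQQ),
      by rw [hH.trace_eq_rank_of_isIdempotentElem hQQ, hrank]⟩

/-- For integers `0 ≤ d ≤ D`, the set
`𝔾 = {P ∈ ℝ^{D×D} : P symmetric, 0 ⪯ P ⪯ I, Tr P = d}` is the convex hull of the set of
orthogonal projection matrices of rank `d`, i.e., of
`{P : P = Pᵀ, P² = P, rank P = d}`. -/
theorem reaper_set_eq_convexHull_projections (D d : ℕ) (hdD : d ≤ D) :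
    {P : Matrix (Fin D) (Fin D) ℝ |
        P.IsSymm ∧ P.PosSemidef ∧ ((1 : Matrix (Fin D) (Fin D) ℝ) - P).PosSemidef ∧
        P.trace = (d : ℝ)} =
      convexHull ℝ
        {P : Matrix (Fin D) (Fin D) ℝ | P.IsSymm ∧ P * P = P ∧ P.rank = d} :=
  reaper_set_eq_convexHull_projections_general D d
end

section
/- Let ρ : (0,∞) → ℝ be differentiable with derivative w = ρ', and let x_1, ..., x_N ∈ ℝ^D be nonzero. If a positive definite symmetric matrix Σ ∈ ℝ^{D×D} is a local minimizer of the energy F(Σ) = (1/2N) ∑_{i=1}^N ρ(x_iᵀ Σ^{−1} x_i) + (1/2) log det(Σ) over the open set of positive definite symmetric D×D matrices, then Σ satisfies the fixed-point equation (1/N) ∑_{i=1}^N w(x_iᵀ Σ^{−1} x_i) x_i x_iᵀ = Σ. -/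
/-! Along the line `t ↦ S + t • C` in the symmetric direction `C = (1/N) S⁻¹ A S⁻¹ - S⁻¹`, with
`A = ∑ᵢ w(xᵢᵀ S⁻¹ xᵢ) xᵢ xᵢᵀ`, the energy has derivative `-(1/2) tr (C C)` at `t = 0`. Positive
definite matrices form a neighbourhood of `S` within the symmetric ones, so `t = 0` is a local
minimum and this derivative vanishes; for symmetric `C` that forces `C = 0`, i.e. `(1/N) A = S`. -/

open Matrix Filter Topology

namespace Matrix

variable {n : Type*} [Fintype n]

theorem posDef_mem_nhdsWithin_isHermitian {S : Matrix n n ℝ} (hS : S.PosDef) :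
    {A : Matrix n n ℝ | A.PosDef} ∈ 𝓝[{A | A.IsHermitian}] S := by
  have hsphere : ∀ᶠ A in 𝓝 S, ∀ u ∈ Metric.sphere (0 : n → ℝ) 1, 0 < u ⬝ᵥ A *ᵥ u := by
    refine (isCompact_sphere 0 1).eventually_forall_of_forall_eventually fun u hu => ?_
    have hcont : Continuous fun p : Matrix n n ℝ × (n → ℝ) => p.2 ⬝ᵥ p.1 *ᵥ p.2 := by
      simp only [dotProduct, mulVec]
      fun_prop
    refine hcont.continuousAt.eventually (lt_mem_nhds ?_)
    simpa using hS.dotProduct_mulVec_pos (ne_zero_of_mem_unit_sphere ⟨u, hu⟩)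
  filter_upwards [eventually_nhdsWithin_of_eventually_nhds hsphere, self_mem_nhdsWithin]
    with A hA hAherm
  refine PosDef.of_dotProduct_mulVec_pos hAherm fun v hv => ?_
  have hnorm : 0 < ‖v‖ := norm_pos_iff.mpr hv
  have hu := hA (‖v‖⁻¹ • v) (by simp [norm_smul, hnorm.ne'])
  rw [mulVec_smul, dotProduct_smul, smul_dotProduct, smul_eq_mul, smul_eq_mul] at hu
  simpa using pos_of_mul_pos_right (pos_of_mul_pos_right hu (by positivity)) (by positivity)

theorem _root_.IsLocalMinOn.isLocalMin_add_smul_of_posDef {f : Matrix n n ℝ → ℝ}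
    {S H : Matrix n n ℝ} (hmin : IsLocalMinOn f {A | A.PosDef} S) (hS : S.PosDef)
    (hH : H.IsHermitian) : IsLocalMin (fun t : ℝ => f (S + t • H)) 0 := by
  have hline : Tendsto (fun t : ℝ => S + t • H) (𝓝 0) (𝓝[{A | A.IsHermitian}] S) := by
    refine tendsto_nhdsWithin_iff.mpr
      ⟨?_, Eventually.of_forall fun t => hS.1.add (hH.smul (IsSelfAdjoint.all t))⟩
    have : Continuous fun t : ℝ => S + t • H := by fun_prop
    simpa using this.tendsto 0
  have hnhds := nhdsWithin_le_of_mem (posDef_mem_nhdsWithin_isHermitian hS)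
  simpa [IsLocalMin, IsMinFilter] using hline.eventually (hmin.filter_mono hnhds)

variable [DecidableEq n]

section Det

variable {𝕜 : Type*} [NontriviallyNormedField 𝕜]

open Polynomial in
theorem hasDerivAt_det_one_add_smul (M : Matrix n n 𝕜) :
    HasDerivAt (fun t : 𝕜 => (1 + t • M).det) M.trace 0 := by
  have h := (det (1 + (X : 𝕜[X]) • M.map C)).hasDerivAt 0
  rw [derivative_det_one_add_X_smul] at h
  convert h using 1
  funext t
  simp [eval_det, ← smul_eq_mul_diagonal]

theorem hasDerivAt_det_add_smul {S : Matrix n n 𝕜} (hS : IsUnit S.det) (H : Matrix n n 𝕜) :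
    HasDerivAt (fun t : 𝕜 => (S + t • H).det) (S.det * (S⁻¹ * H).trace) 0 := by
  have hfactor : ∀ t : 𝕜, S + t • H = S * (1 + t • (S⁻¹ * H)) := fun t => by
    rw [mul_add, mul_one, Matrix.mul_smul, mul_nonsing_inv_cancel_left _ _ hS]
  simp only [hfactor, det_mul]
  exact (hasDerivAt_det_one_add_smul _).const_mul _

end Det

theorem hasDerivAt_log_det_add_smul {S : Matrix n n ℝ} (hS : S.PosDef) (H : Matrix n n ℝ) :
    HasDerivAt (fun t : ℝ => Real.log (S + t • H).det) (S⁻¹ * H).trace 0 := by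
  have hdet := hS.det_pos.ne'
  convert (hasDerivAt_det_add_smul hdet.isUnit H).log (by simpa using hdet) using 1
  rw [zero_smul, add_zero, mul_div_cancel_left₀ _ hdet]

section Inverse

-- Only needed to invoke `hasFDerivAt_ringInverse`; the statements below do not mention a norm.
attribute [local instance] Matrix.linftyOpNormedRing Matrix.linftyOpNormedAlgebra

theorem hasDerivAt_inv_add_smul {S : Matrix n n ℝ} (hS : IsUnit S) (H : Matrix n n ℝ) :
    HasDerivAt (fun t : ℝ => (S + t • H)⁻¹) (-(S⁻¹ * H * S⁻¹)) 0 := by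
  have : CompleteSpace (Matrix n n ℝ) := FiniteDimensional.complete ℝ _
  have hline : HasDerivAt (fun t : ℝ => S + t • H) H 0 :=
    (((hasDerivAt_id (0 : ℝ)).smul_const H).const_add S).congr_deriv (one_smul _ _)
  have h := (hasFDerivAt_ringInverse (𝕜 := ℝ) hS.unit).comp_hasDerivAt_of_eq (0 : ℝ) hline
    (by simp)
  rw [show (fun t : ℝ => (S + t • H)⁻¹) = Ring.inverse ∘ fun t => S + t • H from
    funext fun t => nonsing_inv_eq_ringInverse _]
  exact h.congr_deriv (by simp [coe_units_inv])

theorem hasDerivAt_dotProduct_inv_add_smul_mulVec {S : Matrix n n ℝ} (hS : IsUnit S)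
    (H : Matrix n n ℝ) (v : n → ℝ) :
    HasDerivAt (fun t : ℝ => v ⬝ᵥ (S + t • H)⁻¹ *ᵥ v) (-(v ⬝ᵥ (S⁻¹ * H * S⁻¹) *ᵥ v)) 0 := by
  let quadForm : Matrix n n ℝ →ₗ[ℝ] ℝ :=
    { toFun := fun M => v ⬝ᵥ M *ᵥ v
      map_add' := fun M M' => by simp [add_mulVec, dotProduct_add]
      map_smul' := fun c M => by simp [smul_mulVec, dotProduct_smul] }
  exact (quadForm.toContinuousLinearMap.hasFDerivAt.comp_hasDerivAt (0 : ℝ)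
    (hasDerivAt_inv_add_smul hS H)).congr_deriv (by
      show v ⬝ᵥ (-(S⁻¹ * H * S⁻¹)) *ᵥ v = _
      rw [neg_mulVec, dotProduct_neg])

end Inverse

omit [DecidableEq n] in
theorem dotProduct_mulVec_eq_trace_mul_vecMulVec {R : Type*} [CommSemiring R]
    (M : Matrix n n R) (v : n → R) : v ⬝ᵥ M *ᵥ v = (M * vecMulVec v v).trace := by
  rw [mul_vecMulVec, trace_vecMulVec, dotProduct_comm]

theorem eq_of_inv_mul_mul_inv_eq_inv {R : Type*} [CommRing R] {S B : Matrix n n R}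
    (hS : IsUnit S.det) (h : S⁻¹ * B * S⁻¹ = S⁻¹) : B = S := by
  calc B = S * (S⁻¹ * B * S⁻¹) * S := by
        simp only [Matrix.mul_assoc, nonsing_inv_mul _ hS, mul_one,
          mul_nonsing_inv_cancel_left _ _ hS]
    _ = S := by rw [h, mul_nonsing_inv _ hS, one_mul]

end Matrix

open Matrix

section Scatter

variable {n ι : Type*} [Fintype n] [DecidableEq n] [Fintype ι]

noncomputable def weightedScatter (w : ℝ → ℝ) (x : ι → n → ℝ) (S : Matrix n n ℝ) :
    Matrix n n ℝ :=
  ∑ i, w (x i ⬝ᵥ S⁻¹ *ᵥ x i) • vecMulVec (x i) (x i)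

theorem isHermitian_weightedScatter (w : ℝ → ℝ) (x : ι → n → ℝ) (S : Matrix n n ℝ) :
    (weightedScatter w x S).IsHermitian :=
  isSelfAdjoint_sum _ fun _ _ => IsHermitian.smul (by simp [IsHermitian]) (IsSelfAdjoint.all _)

theorem hasDerivAt_sum_comp_dotProduct_inv_add_smul_mulVec {ρ w : ℝ → ℝ}
    (hρ : ∀ t : ℝ, 0 < t → HasDerivAt ρ (w t) t) {x : ι → n → ℝ} (hx : ∀ i, x i ≠ 0)
    {S : Matrix n n ℝ} (hS : S.PosDef) (H : Matrix n n ℝ) :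
    HasDerivAt (fun t : ℝ => ∑ i, ρ (x i ⬝ᵥ (S + t • H)⁻¹ *ᵥ x i))
      (-(H * (S⁻¹ * weightedScatter w x S * S⁻¹)).trace) 0 := by
  have hterm : ∀ i, HasDerivAt (fun t : ℝ => ρ (x i ⬝ᵥ (S + t • H)⁻¹ *ᵥ x i))
      (w (x i ⬝ᵥ S⁻¹ *ᵥ x i) * -(x i ⬝ᵥ (S⁻¹ * H * S⁻¹) *ᵥ x i)) 0 := fun i => by
    have hq : 0 < x i ⬝ᵥ S⁻¹ *ᵥ x i := by simpa using hS.inv.dotProduct_mulVec_pos (hx i)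
    exact (hρ _ hq).comp_of_eq 0 (hasDerivAt_dotProduct_inv_add_smul_mulVec hS.isUnit H (x i))
      (by simp)
  refine (HasDerivAt.fun_sum fun i _ => hterm i).congr_deriv ?_
  calc ∑ i, w (x i ⬝ᵥ S⁻¹ *ᵥ x i) * -(x i ⬝ᵥ (S⁻¹ * H * S⁻¹) *ᵥ x i)
      = -(S⁻¹ * H * S⁻¹ * weightedScatter w x S).trace := by
        simp only [weightedScatter, Matrix.mul_sum, Matrix.mul_smul, trace_sum, trace_smul,
          dotProduct_mulVec_eq_trace_mul_vecMulVec, smul_eq_mul, mul_neg, Finset.sum_neg_distrib]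
    _ = -(H * (S⁻¹ * weightedScatter w x S * S⁻¹)).trace := by
        rw [Matrix.mul_assoc (S⁻¹ * H), Matrix.mul_assoc, trace_mul_comm S⁻¹]
        simp only [Matrix.mul_assoc]

theorem hasDerivAt_robustEnergy_add_smul (c : ℝ) {ρ w : ℝ → ℝ}
    (hρ : ∀ t : ℝ, 0 < t → HasDerivAt ρ (w t) t) {x : ι → n → ℝ} (hx : ∀ i, x i ≠ 0)
    {S : Matrix n n ℝ} (hS : S.PosDef) (H : Matrix n n ℝ) :
    HasDerivAt (fun t : ℝ => c * ∑ i, ρ (x i ⬝ᵥ (S + t • H)⁻¹ *ᵥ x i) +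
        1 / 2 * Real.log (S + t • H).det)
      (-(1 / 2) * (H * ((2 * c) • (S⁻¹ * weightedScatter w x S * S⁻¹) - S⁻¹)).trace) 0 := by
  refine (((hasDerivAt_sum_comp_dotProduct_inv_add_smul_mulVec hρ hx hS H).const_mul c).add
    ((hasDerivAt_log_det_add_smul hS H).const_mul (1 / 2))).congr_deriv ?_
  rw [mul_sub, trace_sub, Matrix.mul_smul, trace_smul, smul_eq_mul, trace_mul_comm S⁻¹]
  ring

end Scatter

theorem maronna_first_order_condition_general (D N : ℕ)
    (ρ w : ℝ → ℝ) (hρ : ∀ t : ℝ, 0 < t → HasDerivAt ρ (w t) t)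
    (x : Fin N → Fin D → ℝ) (hx : ∀ i, x i ≠ 0)
    (F : Matrix (Fin D) (Fin D) ℝ → ℝ)
    (hF : ∀ S : Matrix (Fin D) (Fin D) ℝ,
      F S = (1 / (2 * (N : ℝ))) * ∑ i, ρ (x i ⬝ᵥ S⁻¹.mulVec (x i)) +
        (1 / 2) * Real.log S.det)
    (S : Matrix (Fin D) (Fin D) ℝ) (hS : S.PosDef)
    (hmin : IsLocalMinOn F {A : Matrix (Fin D) (Fin D) ℝ | A.PosDef} S) :
    (1 / (N : ℝ)) • ∑ i, w (x i ⬝ᵥ S⁻¹.mulVec (x i)) • vecMulVec (x i) (x i) = S := by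
  set K := S⁻¹
  set C := (1 / (N : ℝ)) • (K * weightedScatter w x S * K) - K
  have hCherm : C.IsHermitian := by
    have hKAK := isHermitian_mul_mul_conjTranspose K (isHermitian_weightedScatter w x S)
    rw [hS.1.inv.eq] at hKAK
    exact (hKAK.smul (IsSelfAdjoint.all _)).sub hS.1.inv
  have hderiv : HasDerivAt (fun t : ℝ => F (S + t • C)) (-(1 / 2) * (C * C).trace) 0 := by
    have h := hasDerivAt_robustEnergy_add_smul (1 / (2 * (N : ℝ))) hρ hx hS C
    rw [show 2 * (1 / (2 * (N : ℝ))) = 1 / N by ring] at h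
    simpa only [hF] using h
  have htrace : (C * Cᴴ).trace = 0 := by
    have := (hmin.isLocalMin_add_smul_of_posDef hS hCherm).hasDerivAt_eq_zero hderiv
    rw [hCherm.eq]
    linarith
  have hfix : K * ((1 / (N : ℝ)) • weightedScatter w x S) * K = K := by
    rw [Matrix.mul_smul, Matrix.smul_mul]
    exact sub_eq_zero.mp (trace_mul_conjTranspose_self_eq_zero_iff.mp htrace)
  exact eq_of_inv_mul_mul_inv_eq_inv hS.det_pos.ne'.isUnit hfix

/-- Let `ρ : (0,∞) → ℝ` be differentiable with derivative `w = ρ'`, and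
let `x 1, …, x N ∈ ℝ^D` be nonzero. If a positive definite symmetric `Σ` is a local
minimizer of `F(Σ) = (1/2N) ∑ ρ(x iᵀ Σ⁻¹ x i) + (1/2) log det Σ` over the open set of
positive definite symmetric matrices, then it satisfies the fixed-point equation
`(1/N) ∑ w(x iᵀ Σ⁻¹ x i) x i x iᵀ = Σ`. -/
theorem maronna_first_order_condition (D N : ℕ) (hN : 0 < N)
    (ρ w : ℝ → ℝ) (hρ : ∀ t : ℝ, 0 < t → HasDerivAt ρ (w t) t)
    (x : Fin N → Fin D → ℝ) (hx : ∀ i, x i ≠ 0)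
    (F : Matrix (Fin D) (Fin D) ℝ → ℝ)
    (hF : ∀ S : Matrix (Fin D) (Fin D) ℝ,
      F S = (1 / (2 * (N : ℝ))) * ∑ i, ρ (x i ⬝ᵥ S⁻¹.mulVec (x i)) +
        (1 / 2) * Real.log S.det)
    (S : Matrix (Fin D) (Fin D) ℝ) (hS : S.PosDef)
    (hmin : IsLocalMinOn F {A : Matrix (Fin D) (Fin D) ℝ | A.PosDef} S) :
    (1 / (N : ℝ)) • ∑ i, w (x i ⬝ᵥ S⁻¹.mulVec (x i)) • vecMulVec (x i) (x i) = S :=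
  maronna_first_order_condition_general D N ρ w hρ x hx F hF S hS hmin
end

section
/- (PCA initialization lemma, a consequence of the Davis–Kahan sin Θ theorem.) Let X = [X_in, X_out] ∈ ℝ^{D×N} be a noiseless inlier-outlier data matrix whose inlier columns X_in all lie in a d-dimensional linear subspace L* of ℝ^D. Suppose that for some 0 < γ < π/2, sin(γ) · λ_d(X_in X_inᵀ) > ‖X_out‖_2², where λ_d denotes the d-th largest eigenvalue and ‖·‖_2 the spectral norm. Then for any d-dimensional subspace V of ℝ^D that is spanned by eigenvectors of X Xᵀ corresponding to its d largest eigenvalues (a PCA d-subspace), the operator norm ‖Q_{L*} P_V‖_2 < sin(γ); equivalently, the largest principal angle between V and L* is less than γ, so the PCA d-subspace lies in the ball B(L*, γ) of subspaces whose largest principal angle with L* is less than γ. -/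
/-!
Write `A_in = X_in X_inᵀ`, `A_out = X_out X_outᵀ` and `A = A_in + A_out`. Since `A_out` is
positive semidefinite, Weyl's monotonicity gives `λ_d(A_in) ≤ λ_d(A)`, and the gap condition
forces `λ_d(A_in) > 0`; so `A` is invertible on the PCA subspace `V` with
`‖A⁻¹ v‖ ≤ ‖v‖ / λ_d(A_in)`. Writing `v = A y`, the inlier part
`A_in y` lies in `L*`, hence `Q_{L*} v = Q_{L*} A_out y` and
`‖Q_{L*} v‖ ≤ ‖X_out‖₂² ‖y‖ < sin γ · λ_d(A_in) ‖y‖ ≤ sin γ ‖v‖`.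
-/

open scoped RealInnerProductSpace
open Module Submodule

section Geometry

variable {𝕜 E : Type*} [RCLike 𝕜] [NormedAddCommGroup E] [InnerProductSpace 𝕜 E]

theorem Orthonormal.exists_orthonormalBasis_eq [FiniteDimensional 𝕜 E] {ι : Type*} [Fintype ι]
    {v : ι → E} (hv : Orthonormal 𝕜 v) (hcard : Fintype.card ι = finrank 𝕜 E) :
    ∃ b : OrthonormalBasis ι 𝕜 E, ⇑b = v :=
  ⟨.mk hv (hv.linearIndependent.span_eq_top_of_card_eq_finrank' hcard).ge,
    OrthonormalBasis.coe_mk _ _⟩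

theorem Orthonormal.inner_eq_zero_of_mem_span_image {ι : Type*} {v : ι → E}
    (hv : Orthonormal 𝕜 v) {s : Set ι} {j : ι} (hj : j ∉ s) {x : E}
    (hx : x ∈ span 𝕜 (v '' s)) : inner 𝕜 (v j) x = 0 := by
  have hle : span 𝕜 (v '' s) ≤ (𝕜 ∙ v j)ᗮ := by
    rw [span_le]
    rintro _ ⟨i, hi, rfl⟩
    exact mem_orthogonal_singleton_iff_inner_right.2 (hv.2 (ne_of_mem_of_not_mem hi hj).symm)
  exact mem_orthogonal_singleton_iff_inner_right.1 (hle hx)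

theorem Submodule.exists_mem_orthogonal_ne_zero_of_finrank_lt [FiniteDimensional 𝕜 E]
    {K W : Submodule 𝕜 E} (h : finrank 𝕜 W < finrank 𝕜 K) : ∃ x ∈ K, x ∈ Wᗮ ∧ x ≠ 0 := by
  obtain ⟨x, hx, hx0⟩ := exists_mem_ne_zero_of_ne_bot <|
    LinearMap.ker_ne_bot_of_finrank_lt (f := W.orthogonalProjectionOnto.toLinearMap ∘ₗ K.subtype) h
  exact ⟨x, x.2, by simpa using hx, by simpa using hx0⟩

theorem Submodule.norm_orthogonalProjectionOnto_orthogonal_add_apply_le {K : Submodule 𝕜 E}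
    [Kᗮ.HasOrthogonalProjection] {T T' : E →L[𝕜] E} (hT : ∀ y, T y ∈ K) (y : E) :
    ‖Kᗮ.orthogonalProjectionOnto ((T + T') y)‖ ≤ ‖T'‖ * ‖y‖ :=
  calc ‖Kᗮ.orthogonalProjectionOnto ((T + T') y)‖
      = ‖Kᗮ.orthogonalProjectionOnto (T' y)‖ := by
        rw [add_apply, map_add,
          orthogonalProjectionOnto_eq_zero_iff.2 (le_orthogonal_orthogonal _ (hT y)), zero_add]
    _ ≤ ‖T' y‖ := norm_orthogonalProjectionOnto_apply_le _ _
    _ ≤ ‖T'‖ * ‖y‖ := T'.le_opNorm y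

end Geometry

variable {E : Type*} [NormedAddCommGroup E] [InnerProductSpace ℝ E]

/-- `covOp x = X Xᵀ` for the matrix `X` whose columns are the vectors `x i`. -/
noncomputable def covOp {ι : Type*} [Fintype ι] (x : ι → E) : E →L[ℝ] E :=
  ∑ i, (innerSL ℝ (x i)).smulRight (x i)

section covOp

variable {ι : Type*} [Fintype ι] (x : ι → E)

theorem covOp_apply (v : E) : covOp x v = ∑ i, ⟪x i, v⟫ • x i := by
  simp [covOp]

theorem inner_covOp_self (v : E) : ⟪covOp x v, v⟫ = ∑ i, ⟪x i, v⟫ ^ 2 := by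
  simp only [covOp_apply, sum_inner, real_inner_smul_left, sq]

theorem isSymmetric_covOp : (covOp x : E →ₗ[ℝ] E).IsSymmetric := fun v w => by
  simp only [ContinuousLinearMap.coe_coe, covOp_apply, sum_inner, inner_sum,
    real_inner_smul_left, real_inner_smul_right]
  exact Finset.sum_congr rfl fun i _ => by rw [real_inner_comm v]; ring

theorem covOp_apply_mem {K : Submodule ℝ E} (hx : ∀ i, x i ∈ K) (v : E) : covOp x v ∈ K := by
  rw [covOp_apply]
  exact sum_mem fun i _ => smul_mem _ _ (hx i)

theorem inner_covOp_self_nonneg (v : E) : 0 ≤ ⟪covOp x v, v⟫ := by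
  rw [inner_covOp_self]
  positivity

theorem nonneg_of_covOp_apply_eq_smul {μ : ℝ} {u : E} (hu : u ≠ 0) (h : covOp x u = μ • u) :
    0 ≤ μ := by
  have hq : ⟪covOp x u, u⟫ = μ * ‖u‖ ^ 2 := by
    rw [h, real_inner_smul_left, real_inner_self_eq_norm_sq]
  exact nonneg_of_mul_nonneg_left (hq ▸ inner_covOp_self_nonneg x u) (by positivity)

theorem norm_covOp_le {c : ℝ} (hc : 0 ≤ c) (h : ∀ v, ∑ i, ⟪x i, v⟫ ^ 2 ≤ c * ‖v‖ ^ 2) :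
    ‖covOp x‖ ≤ c := by
  rw [ContinuousLinearMap.norm_eq_iSup_rayleighQuotient _ (isSymmetric_covOp x)]
  refine ciSup_le fun v => ?_
  rw [ContinuousLinearMap.rayleighQuotient, ContinuousLinearMap.reApplyInnerSelf_apply,
    RCLike.re_to_real, abs_div, abs_sq, abs_of_nonneg (inner_covOp_self_nonneg x v),
    inner_covOp_self]
  exact div_le_of_le_mul₀ (by positivity) hc (h v)

theorem norm_covOp_le_sSup :
    ‖covOp x‖ ≤ sSup {t : ℝ | ∃ v : E, ‖v‖ = 1 ∧ t = ∑ i, ⟪x i, v⟫ ^ 2} := by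
  set S := {t : ℝ | ∃ v : E, ‖v‖ = 1 ∧ t = ∑ i, ⟪x i, v⟫ ^ 2}
  have hbdd : BddAbove S := by
    refine ⟨∑ i, ‖x i‖ ^ 2, ?_⟩
    rintro _ ⟨v, hv, rfl⟩
    refine Finset.sum_le_sum fun i _ => ?_
    simpa [hv, sq] using real_inner_mul_inner_self_le (x i) v
  refine norm_covOp_le x (Real.sSup_nonneg ?_) fun v => ?_
  · rintro _ ⟨v, -, rfl⟩
    positivity
  rcases eq_or_ne v 0 with rfl | hv
  · simp
  have hunit : ∑ i, ⟪x i, ‖v‖⁻¹ • v⟫ ^ 2 ∈ S := ⟨_, norm_smul_inv_norm hv, rfl⟩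
  have hscale : ∑ i, ⟪x i, ‖v‖⁻¹ • v⟫ ^ 2 = (∑ i, ⟪x i, v⟫ ^ 2) / ‖v‖ ^ 2 := by
    simp only [real_inner_smul_right, inv_mul_eq_div, div_pow, Finset.sum_div]
  rw [← div_le_iff₀ (by positivity), ← hscale]
  exact le_csSup hbdd hunit

end covOp

namespace OrthonormalBasis

variable {ι : Type*} [Fintype ι] (b : OrthonormalBasis ι ℝ E) {T : E →L[ℝ] E} {μ : ι → ℝ}

theorem apply_eq_sum_of_apply_eq_smul (hT : ∀ j, T (b j) = μ j • b j) (x : E) :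
    T x = ∑ j, (μ j * ⟪b j, x⟫) • b j := by
  conv_lhs => rw [← b.sum_repr' x]
  simp only [map_sum, map_smul, hT, smul_smul, mul_comm]

theorem inner_apply_self_eq_sum (hT : ∀ j, T (b j) = μ j • b j) (x : E) :
    ⟪T x, x⟫ = ∑ j, μ j * ⟪b j, x⟫ ^ 2 := by
  simp only [b.apply_eq_sum_of_apply_eq_smul hT, sum_inner, real_inner_smul_left, mul_assoc, sq]

theorem inner_apply_self_le (hT : ∀ j, T (b j) = μ j • b j) {c : ℝ} {x : E}
    (h : ∀ j, ⟪b j, x⟫ ≠ 0 → μ j ≤ c) :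
    ⟪T x, x⟫ ≤ c * ‖x‖ ^ 2 := by
  rw [b.inner_apply_self_eq_sum hT, ← b.sum_sq_inner_right, Finset.mul_sum]
  refine Finset.sum_le_sum fun j _ => ?_
  by_cases hj : ⟪b j, x⟫ = 0
  · simp [hj]
  · exact mul_le_mul_of_nonneg_right (h j hj) (sq_nonneg _)

theorem le_inner_apply_self (hT : ∀ j, T (b j) = μ j • b j) {c : ℝ} {x : E}
    (h : ∀ j, ⟪b j, x⟫ ≠ 0 → c ≤ μ j) :
    c * ‖x‖ ^ 2 ≤ ⟪T x, x⟫ := by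
  rw [b.inner_apply_self_eq_sum hT, ← b.sum_sq_inner_right, Finset.mul_sum]
  refine Finset.sum_le_sum fun j _ => ?_
  by_cases hj : ⟪b j, x⟫ = 0
  · simp [hj]
  · exact mul_le_mul_of_nonneg_right (h j hj) (sq_nonneg _)

theorem exists_apply_eq_of_le_eigenvalues (hT : ∀ j, T (b j) = μ j • b j) {c : ℝ} (hc : 0 < c)
    {x : E} (h : ∀ j, ⟪b j, x⟫ ≠ 0 → c ≤ μ j) : ∃ y, T y = x ∧ c * ‖y‖ ≤ ‖x‖ := by
  set y := ∑ j, (⟪b j, x⟫ / μ j) • b j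
  have hy : ∀ j, ⟪b j, y⟫ = ⟪b j, x⟫ / μ j := b.orthonormal.inner_right_fintype _
  have hTy : T y = x := by
    rw [b.apply_eq_sum_of_apply_eq_smul hT]
    conv_rhs => rw [← b.sum_repr' x]
    refine Finset.sum_congr rfl fun j _ => ?_
    by_cases hj : ⟪b j, x⟫ = 0
    · simp [hy, hj]
    · rw [hy, mul_div_cancel₀ _ (hc.trans_le (h j hj)).ne']
  refine ⟨y, hTy, ?_⟩
  have hy_sq : c * ‖y‖ ^ 2 ≤ ‖x‖ * ‖y‖ :=
    calc c * ‖y‖ ^ 2 ≤ ⟪T y, y⟫ :=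
          b.le_inner_apply_self hT fun j hj => h j fun hx => hj (by rw [hy, hx, zero_div])
      _ = ⟪x, y⟫ := by rw [hTy]
      _ ≤ ‖x‖ * ‖y‖ := real_inner_le_norm x y
  rcases (norm_nonneg y).eq_or_lt with hy0 | hy0
  · rw [← hy0, mul_zero]
    exact norm_nonneg x
  · nlinarith

/-- Weyl's monotonicity theorem. -/
theorem eigenvalue_le_of_inner_apply_self_le [FiniteDimensional ℝ E] {n : ℕ}
    {T T' : E →L[ℝ] E} {μ μ' : Fin n → ℝ} (b b' : OrthonormalBasis (Fin n) ℝ E)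
    (hT : ∀ j, T (b j) = μ j • b j) (hT' : ∀ j, T' (b' j) = μ' j • b' j)
    (hμ : Antitone μ) (hμ' : Antitone μ') (hTT' : ∀ x, ⟪T x, x⟫ ≤ ⟪T' x, x⟫) (k : Fin n) :
    μ k ≤ μ' k := by
  have hdim : finrank ℝ (span ℝ (b' '' Set.Iio k)) < finrank ℝ (span ℝ (b '' Set.Iic k)) := by
    have hli : LinearIndependent ℝ fun j : Set.Iic k => b j :=
      b.orthonormal.linearIndependent.comp _ Subtype.val_injective
    rw [Set.image_eq_range, Set.image_eq_range, finrank_span_eq_card hli]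
    calc _ ≤ Fintype.card (Set.Iio k) := finrank_range_le_card _
      _ < Fintype.card (Set.Iic k) := by simp
  obtain ⟨x, hxU, hxW, hx0⟩ := exists_mem_orthogonal_ne_zero_of_finrank_lt hdim
  have hlow : μ k * ‖x‖ ^ 2 ≤ ⟪T x, x⟫ := b.le_inner_apply_self hT fun j hj =>
    hμ (not_not.1 fun hjk => hj (b.orthonormal.inner_eq_zero_of_mem_span_image hjk hxU))
  have hup : ⟪T' x, x⟫ ≤ μ' k * ‖x‖ ^ 2 := b'.inner_apply_self_le hT' fun j hj =>
    hμ' (le_of_not_gt fun hjk =>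
      hj (inner_right_of_mem_orthogonal (subset_span (Set.mem_image_of_mem _ hjk)) hxW))
  exact le_of_mul_le_mul_right (hlow.trans ((hTT' x).trans hup)) (by positivity)

end OrthonormalBasis

theorem pca_initialization_davis_kahan_general (D d Nin Nout : ℕ)
    (hd : 0 < d) (hdD : d ≤ D) (γ : ℝ)
    (Lstar : Submodule ℝ (EuclideanSpace ℝ (Fin D)))
    (xin : Fin Nin → EuclideanSpace ℝ (Fin D)) (hxin : ∀ i, xin i ∈ Lstar)
    (xout : Fin Nout → EuclideanSpace ℝ (Fin D))
    -- eigendecomposition of the inlier covariance `X_in X_inᵀ`, in decreasing order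
    (lam : Fin D → ℝ) (u : Fin D → EuclideanSpace ℝ (Fin D))
    (hu : Orthonormal ℝ u)
    (heigin : ∀ j : Fin D, ∑ i, ⟪xin i, u j⟫ • xin i = lam j • u j)
    (hlamdec : Antitone lam)
    -- the spectral gap condition `sin(γ) · λ_d(X_in X_inᵀ) > ‖X_out‖₂²`
    (hgap : sSup {t : ℝ | ∃ v : EuclideanSpace ℝ (Fin D), ‖v‖ = 1 ∧
        t = ∑ i, ⟪xout i, v⟫ ^ 2} <
      Real.sin γ * lam ⟨d - 1, lt_of_lt_of_le (Nat.sub_lt hd one_pos) hdD⟩)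
    -- eigendecomposition of the full covariance `X Xᵀ`, in decreasing order
    (nu : Fin D → ℝ) (w : Fin D → EuclideanSpace ℝ (Fin D))
    (hw : Orthonormal ℝ w)
    (heigfull : ∀ j : Fin D,
      (∑ i, ⟪xin i, w j⟫ • xin i) + ∑ i, ⟪xout i, w j⟫ • xout i = nu j • w j)
    (hnudec : Antitone nu)
    -- `V` is the corresponding PCA `d`-subspace
    (V : Submodule ℝ (EuclideanSpace ℝ (Fin D)))
    (hV : V = Submodule.span ℝ (w '' {j : Fin D | (j : ℕ) < d})) :
    ∀ v ∈ V, v ≠ 0 →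
      ‖(Lstarᗮ.orthogonalProjectionOnto v : EuclideanSpace ℝ (Fin D))‖ <
        Real.sin γ * ‖v‖ := by
  subst hV
  obtain ⟨bu, rfl⟩ := hu.exists_orthonormalBasis_eq (by simp)
  obtain ⟨bw, rfl⟩ := hw.exists_orthonormalBasis_eq (by simp)
  set k : Fin D := ⟨d - 1, lt_of_lt_of_le (Nat.sub_lt hd one_pos) hdD⟩
  set A := covOp xin + covOp xout
  have hAin : ∀ j, covOp xin (bu j) = lam j • bu j := fun j => (covOp_apply _ _).trans (heigin j)
  have hA : ∀ j, A (bw j) = nu j • bw j := fun j => by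
    simp only [A, add_apply, covOp_apply, heigfull]
  have hout : ‖covOp xout‖ < Real.sin γ * lam k := (norm_covOp_le_sSup xout).trans_lt hgap
  obtain ⟨hs, hlam⟩ : 0 < Real.sin γ ∧ 0 < lam k :=
    (pos_and_pos_or_neg_and_neg_of_mul_pos ((norm_nonneg _).trans_lt hout)).resolve_right
      fun h => h.2.not_ge (nonneg_of_covOp_apply_eq_smul xin (bu.orthonormal.ne_zero k) (hAin k))
  have hweyl : lam k ≤ nu k := bu.eigenvalue_le_of_inner_apply_self_le bw hAin hA hlamdec hnudec
    (fun x => by simpa [A, inner_add_left] using inner_covOp_self_nonneg xout x) k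
  intro v hv hv0
  obtain ⟨y, rfl, hy⟩ := bw.exists_apply_eq_of_le_eigenvalues hA hlam (x := v) fun j hj =>
    hweyl.trans (hnudec (Fin.le_def.2 (Nat.le_sub_one_of_lt (not_not.1 fun hjd =>
      hj (bw.orthonormal.inner_eq_zero_of_mem_span_image hjd hv)))))
  have hy0 : 0 < ‖y‖ := norm_pos_iff.2 fun h => hv0 (by rw [h, map_zero])
  calc ‖(Lstarᗮ.orthogonalProjectionOnto (A y) : EuclideanSpace ℝ (Fin D))‖
      ≤ ‖covOp xout‖ * ‖y‖ :=
        norm_orthogonalProjectionOnto_orthogonal_add_apply_le (covOp_apply_mem xin hxin) y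
    _ < Real.sin γ * lam k * ‖y‖ := by gcongr
    _ ≤ Real.sin γ * ‖A y‖ := by rw [mul_assoc]; gcongr

/-- PCA initialization lemma, a consequence of the Davis–Kahan sin Θ
theorem. Let `X = [X_in, X_out]` be a noiseless inlier-outlier data matrix whose inlier
columns `xin i` all lie in a `d`-dimensional subspace `L*` of `ℝ^D`. Let `lam`, `u` be a
decreasing eigendecomposition of `X_in X_inᵀ` (the operator `v ↦ ∑ ⟪xin i, v⟫ • xin i`),
so that `lam ⟨d−1⟩ = λ_d(X_in X_inᵀ)`, and suppose for some `0 < γ < π/2` that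
`‖X_out‖₂² < sin(γ) · λ_d(X_in X_inᵀ)`, where
`‖X_out‖₂² = sup {∑ ⟪xout i, v⟫² : ‖v‖ = 1}` is the squared spectral norm. Then for any
PCA `d`-subspace `V`, i.e. the span of eigenvectors of `X Xᵀ` corresponding to its `d`
largest eigenvalues, every nonzero `v ∈ V` satisfies `‖Q_{L*} v‖ < sin(γ) ‖v‖`:
the largest principal angle between `V` and `L*` is less than `γ`, so the PCA `d`-subspace
lies in the ball `B(L*, γ)`. -/
theorem pca_initialization_davis_kahan (D d Nin Nout : ℕ)
    (hd : 0 < d) (hdD : d ≤ D) (γ : ℝ) (hγ0 : 0 < γ) (hγ1 : γ < Real.pi / 2)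
    (Lstar : Submodule ℝ (EuclideanSpace ℝ (Fin D)))
    (hLdim : Module.finrank ℝ Lstar = d)
    (xin : Fin Nin → EuclideanSpace ℝ (Fin D)) (hxin : ∀ i, xin i ∈ Lstar)
    (xout : Fin Nout → EuclideanSpace ℝ (Fin D))
    -- eigendecomposition of the inlier covariance `X_in X_inᵀ`, in decreasing order
    (lam : Fin D → ℝ) (u : Fin D → EuclideanSpace ℝ (Fin D))
    (hu : Orthonormal ℝ u)
    (heigin : ∀ j : Fin D, ∑ i, ⟪xin i, u j⟫ • xin i = lam j • u j)
    (hlamdec : Antitone lam)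
    -- the spectral gap condition `sin(γ) · λ_d(X_in X_inᵀ) > ‖X_out‖₂²`
    (hgap : sSup {t : ℝ | ∃ v : EuclideanSpace ℝ (Fin D), ‖v‖ = 1 ∧
        t = ∑ i, ⟪xout i, v⟫ ^ 2} <
      Real.sin γ * lam ⟨d - 1, lt_of_lt_of_le (Nat.sub_lt hd one_pos) hdD⟩)
    -- eigendecomposition of the full covariance `X Xᵀ`, in decreasing order
    (nu : Fin D → ℝ) (w : Fin D → EuclideanSpace ℝ (Fin D))
    (hw : Orthonormal ℝ w)
    (heigfull : ∀ j : Fin D,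
      (∑ i, ⟪xin i, w j⟫ • xin i) + ∑ i, ⟪xout i, w j⟫ • xout i = nu j • w j)
    (hnudec : Antitone nu)
    -- `V` is the corresponding PCA `d`-subspace
    (V : Submodule ℝ (EuclideanSpace ℝ (Fin D)))
    (hV : V = Submodule.span ℝ (w '' {j : Fin D | (j : ℕ) < d})) :
    ∀ v ∈ V, v ≠ 0 →
      ‖(Lstarᗮ.orthogonalProjectionOnto v : EuclideanSpace ℝ (Fin D))‖ <
        Real.sin γ * ‖v‖ :=
  pca_initialization_davis_kahan_general D d Nin Nout hd hdD γ Lstar xin hxin xout lam u hu heigin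
    hlamdec hgap nu w hw heigfull hnudec V hV
end

section
/- (No spurious local minimizers for the PCA energy.) Let x_1, ..., x_N ∈ ℝ^D and consider the PCA energy f(L) = ∑_{i=1}^N ‖Q_L x_i‖² on the set of d-dimensional linear subspaces of ℝ^D, metrized by the distance dist(L, L') = ‖P_L − P_{L'}‖ between their orthogonal projection matrices. Then every local minimizer of f is a global minimizer: if a d-dimensional subspace L satisfies f(L) ≤ f(L') for all d-dimensional subspaces L' in some neighborhood of L, then f(L) ≤ f(L') for all d-dimensional subspaces L' of ℝ^D. -/
/-!
With the scatter operator `C = ∑ xᵢ xᵢᵀ` one has `f L = ∑ ‖xᵢ‖² - tr (P_L C)`, so a local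
minimiser of `f` is a local maximiser of `L ↦ tr (P_L C)` on the Grassmannian.

Take `u ∈ L`, `v ∈ Lᗮ` and keep `M = L ⊖ ℝu` fixed: the subspaces `M ⊕ ℝ(u + t v)` have the
same dimension, tend to `L` as `t → 0`, and their value of `tr (P C)` differs from that of `L`
by the change of the Rayleigh quotient from `u` to `u + t v`. The first- and second-order
conditions at `t = 0` give `⟪C u, v⟫ = 0` and `R(v) ≤ R(u)`: `L` is `C`-invariant and some `μ`
separates the Rayleigh quotients on `L` from those on `Lᗮ`.

For `D = C - μ` commuting with `P = P_L`, and any `L'` of the same dimension,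
`tr (P D) - tr (P' D) = tr (Q' (P D P) Q') + tr (P' (-Q D Q) P')`, and both compressions are
positive; this is Ky Fan's inequality `tr (P' C) ≤ tr (P C)`.
-/

/-- The orthogonal projection onto a subspace `L` of `ℝ^D`, as a continuous linear map
`ℝ^D → ℝ^D` (the projection matrix `P_L`). -/
noncomputable def projCLM {D : ℕ} (L : Submodule ℝ (EuclideanSpace ℝ (Fin D))) :
    EuclideanSpace ℝ (Fin D) →L[ℝ] EuclideanSpace ℝ (Fin D) :=
  L.subtypeL.comp (Submodule.orthogonalProjectionOnto L)

open Module Filter Topology InnerProductSpace LinearMap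
open scoped RealInnerProductSpace

theorem eq_zero_and_nonpos_of_eventually_mul_add_mul_sq_nonpos {a b : ℝ}
    (h : ∀ᶠ t in 𝓝 (0 : ℝ), a * t + b * t ^ 2 ≤ 0) : a = 0 ∧ b ≤ 0 := by
  have ha : a = 0 := by
    have hmax : IsLocalMax (fun t : ℝ => a * t + b * t ^ 2) 0 :=
      h.mono fun t ht => by simpa using ht
    have hderiv : HasDerivAt (fun t : ℝ => a * t + b * t ^ 2) a 0 := by
      simpa using ((hasDerivAt_id' (0 : ℝ)).const_mul a).fun_add
        ((hasDerivAt_pow 2 (0 : ℝ)).const_mul b)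
    exact hmax.hasDerivAt_eq_zero hderiv
  subst ha
  obtain ⟨t, ht, ht₀⟩ := ((h.filter_mono nhdsWithin_le_nhds).and self_mem_nhdsWithin).exists
    (f := 𝓝[≠] (0 : ℝ))
  exact ⟨rfl, nonpos_of_mul_nonpos_left (by simpa using ht) (sq_pos_of_ne_zero ht₀)⟩

theorem LinearMap.trace_mul_sub_trace_mul_eq {R M : Type*} [CommRing R] [AddCommGroup M]
    [Module R M] {P P' D : Module.End R M} (hP : IsIdempotentElem P) (hPD : Commute P D) :
    trace R M (P * D) - trace R M (P' * D)
      = trace R M (P * D * P * (1 - P')) - trace R M ((1 - P) * D * (1 - P) * P') := by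
  have hPDP : P * D * P = P * D := by rw [mul_assoc, ← hPD.eq, ← mul_assoc, hP.eq]
  have hQDQ : (1 - P) * D * (1 - P) = D - P * D := by
    calc (1 - P) * D * (1 - P) = D - P * D + (P * D * P - D * P) := by noncomm_ring
      _ = D - P * D := by rw [hPDP, hPD.eq, sub_self, add_zero]
  rw [hPDP, hQDQ, mul_sub, mul_one, sub_mul, map_sub, map_sub, trace_mul_comm R P' D]
  ring

variable {E : Type*} [NormedAddCommGroup E] [InnerProductSpace ℝ E]

namespace Submodule

theorem starProjection_span_singleton_eq_smul_rankOne (z : E) :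
    (ℝ ∙ z).starProjection = (‖z‖ ^ 2)⁻¹ • rankOne ℝ z z := by
  ext y
  simp [starProjection_singleton, div_eq_inv_mul, smul_smul]

theorem tendsto_starProjection_span_singleton {z : ℝ → E} {t₀ : ℝ} (hz : ContinuousAt z t₀)
    (hz₀ : z t₀ ≠ 0) :
    Tendsto (fun t => (ℝ ∙ z t).starProjection) (𝓝 t₀) (𝓝 (ℝ ∙ z t₀).starProjection) := by
  simp only [starProjection_span_singleton_eq_smul_rankOne]
  have hr : ContinuousAt (fun t => rankOne ℝ (z t) (z t)) t₀ :=
    (rankOne ℝ (E := E) (F := E)).continuous₂.continuousAt.comp (f := fun t => (z t, z t))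
      (hz.prodMk hz)
  exact ((hz.norm.pow 2).inv₀ (by simpa using hz₀)).smul hr

variable [FiniteDimensional ℝ E]

theorem IsOrtho.starProjection_sup {U V : Submodule ℝ E} (h : U ⟂ V) :
    (U ⊔ V).starProjection = U.starProjection + V.starProjection := by
  ext y
  refine eq_starProjection_of_mem_orthogonal
    (add_mem_sup (U.starProjection_apply_mem y) (V.starProjection_apply_mem y)) ?_
  rw [← inf_orthogonal]
  refine ⟨?_, ?_⟩
  · rw [_root_.add_apply, sub_add_eq_sub_sub]
    exact sub_mem (sub_starProjection_mem_orthogonal y) (h.symm.le (V.starProjection_apply_mem y))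
  · rw [_root_.add_apply, sub_add_eq_sub_sub_swap]
    exact sub_mem (sub_starProjection_mem_orthogonal y) (h.le (U.starProjection_apply_mem y))

theorem finrank_span_singleton_sup {M : Submodule ℝ E} {z : E} (hz : z ∈ Mᗮ) (hz₀ : z ≠ 0) :
    finrank ℝ ↥((ℝ ∙ z) ⊔ M) = finrank ℝ M + 1 := by
  have h := finrank_sup_add_finrank_inf_eq (ℝ ∙ z) M
  have hinf : (ℝ ∙ z) ⊓ M = ⊥ :=
    (M.orthogonal_disjoint.symm.mono_left ((span_singleton_le_iff_mem z _).2 hz)).eq_bot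
  rw [finrank_span_singleton hz₀, hinf, finrank_bot] at h
  omega

theorem isIdempotentElem_starProjection_toLinearMap (K : Submodule ℝ E) :
    IsIdempotentElem (K.starProjection : E →ₗ[ℝ] E) :=
  ContinuousLinearMap.IsIdempotentElem.toLinearMap K.isIdempotentElem_starProjection

theorem toLinearMap_starProjection_orthogonal (K : Submodule ℝ E) :
    (Kᗮ.starProjection : E →ₗ[ℝ] E) = 1 - K.starProjection := by
  rw [K.starProjection_orthogonal', ContinuousLinearMap.toLinearMap_sub]
  rfl

theorem trace_starProjection (K : Submodule ℝ E) :
    trace ℝ E K.starProjection = finrank ℝ K := by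
  have h := (IsIdempotentElem.isProj_range _ K.isIdempotentElem_starProjection_toLinearMap).trace
  rwa [range_starProjection] at h

theorem trace_mul_starProjection_nonneg (K : Submodule ℝ E) {X : E →ₗ[ℝ] E}
    (hX : ∀ y ∈ K, 0 ≤ ⟪y, X y⟫) : 0 ≤ trace ℝ E (X * K.starProjection) := by
  rw [← K.isIdempotentElem_starProjection_toLinearMap.eq, ← mul_assoc, trace_mul_comm,
    ← mul_assoc, trace_eq_sum_inner _ (stdOrthonormalBasis ℝ E)]
  refine Finset.sum_nonneg fun i _ => ?_
  simp only [Module.End.mul_apply, ContinuousLinearMap.coe_coe,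
    ← inner_starProjection_left_eq_right]
  exact hX _ (starProjection_apply_mem K _)

end Submodule

section FiniteDimensional

variable [FiniteDimensional ℝ E]

noncomputable def traceOn (C : E →ₗ[ℝ] E) (K : Submodule ℝ E) : ℝ :=
  trace ℝ E (K.starProjection * C)

theorem traceOn_span_singleton (C : E →ₗ[ℝ] E) (z : E) :
    traceOn C (ℝ ∙ z) = ⟪z, C z⟫ / ‖z‖ ^ 2 := by
  rw [traceOn, trace_mul_comm, Submodule.starProjection_span_singleton_eq_smul_rankOne]
  have : C * ↑((‖z‖ ^ 2)⁻¹ • rankOne ℝ z z) = (‖z‖ ^ 2)⁻¹ • (rankOne ℝ (C z) z : E →ₗ[ℝ] E) := by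
    ext y; simp
  rw [this, map_smul, trace_rankOne, smul_eq_mul, div_eq_inv_mul]

theorem traceOn_sup {C : E →ₗ[ℝ] E} {U V : Submodule ℝ E} (h : U ⟂ V) :
    traceOn C (U ⊔ V) = traceOn C U + traceOn C V := by
  simp only [traceOn, h.starProjection_sup, ContinuousLinearMap.toLinearMap_add, add_mul, map_add]

theorem commute_starProjection_of_inner_eq_zero {C : E →ₗ[ℝ] E} (hC : C.IsSymmetric)
    {L : Submodule ℝ E} (h : ∀ u ∈ L, ∀ v ∈ Lᗮ, ⟪C u, v⟫ = 0) :
    Commute (L.starProjection : E →ₗ[ℝ] E) C := by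
  ext y
  have hCP : C (L.starProjection y) ∈ Lᗮᗮ := fun v hv => by
    rw [real_inner_comm]; exact h _ (L.starProjection_apply_mem y) v hv
  rw [L.orthogonal_orthogonal] at hCP
  have hCQ : C (Lᗮ.starProjection y) ∈ Lᗮ := fun u hu => by
    rw [← hC]; exact h u hu _ (Lᗮ.starProjection_apply_mem y)
  simp only [Module.End.mul_apply, ContinuousLinearMap.coe_coe]
  calc L.starProjection (C y)
      = L.starProjection (C (L.starProjection y) + C (Lᗮ.starProjection y)) := by
        rw [← map_add, L.starProjection_add_starProjection_orthogonal]
    _ = C (L.starProjection y) := by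
        rw [map_add, L.starProjection_eq_self_iff.2 hCP,
          L.starProjection_apply_eq_zero_iff.2 hCQ, add_zero]

theorem traceOn_le_traceOn_of_commute {C : E →ₗ[ℝ] E} {L L' : Submodule ℝ E}
    (hrank : finrank ℝ L' = finrank ℝ L) (hcomm : Commute (L.starProjection : E →ₗ[ℝ] E) C)
    {μ : ℝ} (hlow : ∀ u ∈ L, μ * ‖u‖ ^ 2 ≤ ⟪u, C u⟫)
    (hhigh : ∀ v ∈ Lᗮ, ⟪v, C v⟫ ≤ μ * ‖v‖ ^ 2) :
    traceOn C L' ≤ traceOn C L := by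
  obtain ⟨D, hD⟩ : ∃ D : E →ₗ[ℝ] E, D = C - μ • 1 := ⟨_, rfl⟩
  have htrace : ∀ K : Submodule ℝ E,
      trace ℝ E (K.starProjection * D) = traceOn C K - μ * finrank ℝ K := fun K => by
    rw [hD, mul_sub, mul_smul_comm, mul_one, map_sub, map_smul, K.trace_starProjection, traceOn,
      smul_eq_mul]
  have hform : ∀ (K : Submodule ℝ E) (y : E),
      ⟪y, ((K.starProjection : E →ₗ[ℝ] E) * D * K.starProjection) y⟫
        = ⟪K.starProjection y, C (K.starProjection y)⟫ - μ * ‖K.starProjection y‖ ^ 2 :=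
    fun K y => by
      simp [hD, ← K.inner_starProjection_left_eq_right, inner_sub_right, inner_smul_right]
  set P : E →ₗ[ℝ] E := ↑L.starProjection
  set Q : E →ₗ[ℝ] E := ↑Lᗮ.starProjection
  set P' : E →ₗ[ℝ] E := ↑L'.starProjection
  set Q' : E →ₗ[ℝ] E := ↑L'ᗮ.starProjection
  have hL : 0 ≤ trace ℝ E (P * D * P * Q') :=
    L'ᗮ.trace_mul_starProjection_nonneg fun y _ => by
      rw [hform L y, sub_nonneg]
      exact hlow _ (L.starProjection_apply_mem y)
  have hLperp : 0 ≤ trace ℝ E (-(Q * D * Q) * P') :=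
    L'.trace_mul_starProjection_nonneg fun y _ => by
      rw [LinearMap.neg_apply, inner_neg_right, hform Lᗮ y, neg_nonneg, sub_nonpos]
      exact hhigh _ (Lᗮ.starProjection_apply_mem y)
  have hPD : Commute P D := hD ▸ hcomm.sub_right ((Commute.one_right P).smul_right μ)
  have hsplit := trace_mul_sub_trace_mul_eq (P' := P')
    L.isIdempotentElem_starProjection_toLinearMap hPD
  rw [← L.toLinearMap_starProjection_orthogonal, ← L'.toLinearMap_starProjection_orthogonal,
    htrace, htrace, hrank] at hsplit
  rw [neg_mul, map_neg] at hLperp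
  linarith

def IsLocalMaxOnGrassmannian (F : Submodule ℝ E → ℝ) (L : Submodule ℝ E) : Prop :=
  ∃ ε > 0, ∀ L' : Submodule ℝ E, finrank ℝ L' = finrank ℝ L →
    ‖L.starProjection - L'.starProjection‖ < ε → F L' ≤ F L

open Submodule in
theorem IsLocalMaxOnGrassmannian.eventually_rayleigh_le {C : E →ₗ[ℝ] E} {L : Submodule ℝ E}
    (h : IsLocalMaxOnGrassmannian (traceOn C) L) {u v : E} (hu : u ∈ L) (hu₀ : u ≠ 0)
    (hv : v ∈ Lᗮ) :
    ∀ᶠ t in 𝓝 (0 : ℝ), ⟪u + t • v, C (u + t • v)⟫ / ‖u + t • v‖ ^ 2 ≤ ⟪u, C u⟫ / ‖u‖ ^ 2 := by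
  set M := (ℝ ∙ u)ᗮ ⊓ L
  have hL : (ℝ ∙ u) ⊔ M = L :=
    sup_orthogonal_inf_of_hasOrthogonalProjection ((span_singleton_le_iff_mem _ _).2 hu)
  have huM : u ∈ Mᗮ :=
    (isOrtho_iff_le.2 (inf_le_left : M ≤ (ℝ ∙ u)ᗮ)).symm.le (mem_span_singleton_self u)
  have hzM : ∀ t : ℝ, u + t • v ∈ Mᗮ := fun t =>
    add_mem huM (smul_mem _ t (orthogonal_le inf_le_right hv))
  have hz₀ : ∀ t : ℝ, u + t • v ≠ 0 := fun t hz => by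
    have := congrArg (⟪u, ·⟫) hz
    simp [inner_add_right, inner_smul_right, inner_right_of_mem_orthogonal hu hv, hu₀] at this
  have hortho : ∀ z ∈ Mᗮ, (ℝ ∙ z) ⟂ M := fun z hz =>
    isOrtho_iff_le.2 ((span_singleton_le_iff_mem _ _).2 hz)
  obtain ⟨ε, hε, hmax⟩ := h
  rw [← hL] at hmax
  have hnear : ∀ᶠ t in 𝓝 (0 : ℝ),
      ‖(ℝ ∙ u).starProjection - (ℝ ∙ (u + t • v)).starProjection‖ < ε := by
    have htends := tendsto_starProjection_span_singleton (z := fun t : ℝ => u + t • v)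
      (by fun_prop) (hz₀ 0)
    simp only [zero_smul, add_zero] at htends
    filter_upwards [htends.eventually (Metric.ball_mem_nhds _ hε)] with t ht
    rwa [dist_eq_norm, norm_sub_rev] at ht
  filter_upwards [hnear] with t ht
  have hrank : finrank ℝ ↥((ℝ ∙ (u + t • v)) ⊔ M) = finrank ℝ ↥((ℝ ∙ u) ⊔ M) := by
    rw [finrank_span_singleton_sup (hzM t) (hz₀ t), finrank_span_singleton_sup huM hu₀]
  have hdist : ‖((ℝ ∙ u) ⊔ M).starProjection - ((ℝ ∙ (u + t • v)) ⊔ M).starProjection‖ < ε := by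
    rwa [(hortho u huM).starProjection_sup, (hortho _ (hzM t)).starProjection_sup,
      add_sub_add_right_eq_sub]
  have := hmax _ hrank hdist
  rwa [traceOn_sup (hortho u huM), traceOn_sup (hortho _ (hzM t)), traceOn_span_singleton,
    traceOn_span_singleton, add_le_add_iff_right] at this

theorem IsLocalMaxOnGrassmannian.inner_eq_zero_and_rayleigh_le {C : E →ₗ[ℝ] E} (hC : C.IsSymmetric)
    {L : Submodule ℝ E} (h : IsLocalMaxOnGrassmannian (traceOn C) L) {u v : E} (hu : u ∈ L)
    (hu₀ : u ≠ 0) (hv : v ∈ Lᗮ) :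
    ⟪C u, v⟫ = 0 ∧ ‖u‖ ^ 2 * ⟪v, C v⟫ ≤ ‖v‖ ^ 2 * ⟪u, C u⟫ := by
  have huv : ⟪u, v⟫ = 0 := Submodule.inner_right_of_mem_orthogonal hu hv
  have hu2 : 0 < ‖u‖ ^ 2 := by positivity
  have hquad : ∀ t : ℝ, ⟪u + t • v, C (u + t • v)⟫
      = ⟪u, C u⟫ + 2 * t * ⟪C u, v⟫ + t ^ 2 * ⟪v, C v⟫ := fun t => by
    simp only [map_add, map_smul, inner_add_left, inner_add_right, real_inner_smul_left,
      real_inner_smul_right, ← hC u v, real_inner_comm v (C u)]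
    ring
  have hnorm : ∀ t : ℝ, ‖u + t • v‖ ^ 2 = ‖u‖ ^ 2 + t ^ 2 * ‖v‖ ^ 2 := fun t => by
    rw [norm_add_sq_real, real_inner_smul_right, huv, norm_smul, mul_pow, Real.norm_eq_abs,
      sq_abs]
    ring
  have key : ∀ᶠ t in 𝓝 (0 : ℝ), (2 * ‖u‖ ^ 2 * ⟪C u, v⟫) * t
      + (‖u‖ ^ 2 * ⟪v, C v⟫ - ‖v‖ ^ 2 * ⟪u, C u⟫) * t ^ 2 ≤ 0 := by
    filter_upwards [h.eventually_rayleigh_le hu hu₀ hv] with t ht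
    rw [div_le_div_iff₀ (by rw [hnorm]; positivity) hu2, hquad, hnorm] at ht
    linarith
  obtain ⟨h₁, h₂⟩ := eq_zero_and_nonpos_of_eventually_mul_add_mul_sq_nonpos key
  exact ⟨by simpa [hu₀] using h₁, by linarith⟩

theorem exists_rayleigh_separating_constant {C : E →ₗ[ℝ] E} {L : Submodule ℝ E} (hL : L ≠ ⊥)
    (h : ∀ u ∈ L, u ≠ 0 → ∀ v ∈ Lᗮ, ‖u‖ ^ 2 * ⟪v, C v⟫ ≤ ‖v‖ ^ 2 * ⟪u, C u⟫) :
    ∃ μ : ℝ, (∀ u ∈ L, μ * ‖u‖ ^ 2 ≤ ⟪u, C u⟫) ∧ ∀ v ∈ Lᗮ, ⟪v, C v⟫ ≤ μ * ‖v‖ ^ 2 := by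
  have : Nontrivial L := Submodule.nontrivial_iff_ne_bot.2 hL
  obtain ⟨w, hw, hmin⟩ := (isCompact_sphere (0 : L) 1).exists_isMinOn
    (NormedSpace.sphere_nonempty.2 zero_le_one)
    (Continuous.continuousOn (f := fun y : L => ⟪(y : E), C y⟫) (by fun_prop))
  have hw₁ : ‖(w : E)‖ = 1 := by simpa using hw
  refine ⟨⟪(w : E), C w⟫, fun u hu => ?_, fun v hv => ?_⟩
  · rcases eq_or_ne u 0 with rfl | hu₀
    · simp
    have hu' : 0 < ‖u‖ := norm_pos_iff.2 hu₀
    have hmin_u : ⟪(w : E), C w⟫ ≤ ⟪‖u‖⁻¹ • u, C (‖u‖⁻¹ • u)⟫ :=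
      hmin (a := ‖u‖⁻¹ • ⟨u, hu⟩) (by simp [norm_smul, hu'.ne'])
    rw [map_smul, real_inner_smul_left, real_inner_smul_right, ← mul_assoc, ← sq, inv_pow,
      ← div_eq_inv_mul, le_div_iff₀ (by positivity)] at hmin_u
    exact hmin_u
  · simpa [hw₁, mul_comm] using h w w.2 (fun h₀ => by simp [h₀] at hw₁) v hv

theorem IsLocalMaxOnGrassmannian.traceOn_le {C : E →ₗ[ℝ] E} (hC : C.IsSymmetric)
    {L : Submodule ℝ E} (h : IsLocalMaxOnGrassmannian (traceOn C) L) {L' : Submodule ℝ E}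
    (hrank : finrank ℝ L' = finrank ℝ L) : traceOn C L' ≤ traceOn C L := by
  rcases eq_or_ne L ⊥ with rfl | hL
  · rw [finrank_bot, Submodule.finrank_eq_zero] at hrank
    rw [hrank]
  have hB : ∀ u ∈ L, ∀ v ∈ Lᗮ, ⟪C u, v⟫ = 0 := fun u hu v hv => by
    rcases eq_or_ne u 0 with rfl | hu₀
    · simp
    exact (h.inner_eq_zero_and_rayleigh_le hC hu hu₀ hv).1
  obtain ⟨μ, hlow, hhigh⟩ := exists_rayleigh_separating_constant hL
    fun u hu hu₀ v hv => (h.inner_eq_zero_and_rayleigh_le hC hu hu₀ hv).2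
  exact traceOn_le_traceOn_of_commute hrank (commute_starProjection_of_inner_eq_zero hC hB)
    hlow hhigh

end FiniteDimensional

section Scatter

variable {ι : Type*} [Fintype ι] (x : ι → E)

noncomputable def scatterOperator : E →ₗ[ℝ] E :=
  ∑ i, (rankOne ℝ (x i) (x i) : E →ₗ[ℝ] E)

theorem isSymmetric_scatterOperator : (scatterOperator x).IsSymmetric := fun y z => by
  simp only [scatterOperator, coe_sum, ContinuousLinearMap.coe_coe, Finset.sum_apply,
    rankOne_apply, real_inner_comm y, sum_inner, real_inner_smul_left, inner_sum,
    real_inner_smul_right, mul_comm]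

variable [FiniteDimensional ℝ E]

theorem traceOn_scatterOperator (K : Submodule ℝ E) :
    traceOn (scatterOperator x) K = ∑ i, ‖K.starProjection (x i)‖ ^ 2 := by
  simp only [traceOn, scatterOperator, Finset.mul_sum, map_sum]
  refine Finset.sum_congr rfl fun i _ => ?_
  have : (K.starProjection : E →ₗ[ℝ] E) * ↑(rankOne ℝ (x i) (x i))
      = ↑(rankOne ℝ (K.starProjection (x i)) (x i)) := by
    ext; simp
  rw [this, trace_rankOne, real_inner_comm]
  simpa using K.re_inner_starProjection_eq_normSq (x i)

theorem sum_norm_sq_orthogonalProjectionOnto_orthogonal_eq (K : Submodule ℝ E) :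
    ∑ i, ‖(Kᗮ.orthogonalProjectionOnto (x i) : E)‖ ^ 2
      = ∑ i, ‖x i‖ ^ 2 - traceOn (scatterOperator x) K := by
  rw [traceOn_scatterOperator, ← Finset.sum_sub_distrib]
  refine Finset.sum_congr rfl fun i _ => ?_
  rw [eq_sub_iff_add_eq', Submodule.norm_sq_eq_add_norm_sq_projection (x i) K]
  rfl

end Scatter

/-- No spurious local minimizers for the PCA energy. Let
`x 1, …, x N ∈ ℝ^D` and consider `f(L) = ∑ ‖Q_L (x i)‖²` on the set of `d`-dimensional
subspaces of `ℝ^D`, metrized by `dist(L, L') = ‖P_L − P_{L'}‖` (operator norm of the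
difference of the orthogonal projections). Then every local minimizer of `f` is a global
minimizer: if a `d`-dimensional subspace `L` satisfies `f L ≤ f L'` for all `d`-dimensional
`L'` in some neighborhood of `L`, then `f L ≤ f L'` for all `d`-dimensional `L'`. -/
theorem pca_no_spurious_local_minima (D d N : ℕ)
    (x : Fin N → EuclideanSpace ℝ (Fin D))
    (f : Submodule ℝ (EuclideanSpace ℝ (Fin D)) → ℝ)
    (hf : ∀ L : Submodule ℝ (EuclideanSpace ℝ (Fin D)),
      f L = ∑ i, ‖(Submodule.orthogonalProjectionOnto Lᗮ (x i) : EuclideanSpace ℝ (Fin D))‖ ^ 2)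
    (L : Submodule ℝ (EuclideanSpace ℝ (Fin D))) (hL : Module.finrank ℝ L = d)
    (hloc : ∃ ε > (0 : ℝ), ∀ L' : Submodule ℝ (EuclideanSpace ℝ (Fin D)),
      Module.finrank ℝ L' = d → ‖projCLM L - projCLM L'‖ < ε → f L ≤ f L') :
    ∀ L' : Submodule ℝ (EuclideanSpace ℝ (Fin D)),
      Module.finrank ℝ L' = d → f L ≤ f L' := by
  intro L' hL'
  have hf' : ∀ K, f K = ∑ i, ‖x i‖ ^ 2 - traceOn (scatterOperator x) K := fun K => by
    rw [hf, sum_norm_sq_orthogonalProjectionOnto_orthogonal_eq]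
  obtain ⟨ε, hε, hmin⟩ := hloc
  have hmax : IsLocalMaxOnGrassmannian (traceOn (scatterOperator x)) L :=
    ⟨ε, hε, fun K hK hdist => by
      have := hmin K (hK.trans hL) hdist
      rwa [hf', hf', sub_le_sub_iff_left] at this⟩
  have := hmax.traceOn_le (isSymmetric_scatterOperator x) (hL'.trans hL.symm)
  rw [hf', hf']
  linarith
end
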